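/- arXiv:1810.06349 — 9 statements merged into one kernel-verified Lean document; each statement's English description precedes it below -/
import Mathlib

section
/- Assume (A1), (A2), (A3) and the non-resonance condition (N): L(k,l) ≠ 0 for every (k,l) ∈ ℕ*×ℕ. Then the equation (t∂ₜ)^m u = F(t, x, {(t∂ₜ)^j ∂ₓ^α u}_{(j,α)∈I_m}) admits a unique formal power series solution u(t,x) ∈ ℂ[[t,x]] satisfying u(0,x) ≡ 0. -/
/-!
Writing `u = Σ u_k(x) t^k`, the coefficient of `t^k` in the equation reads
`P_k u_k = a(x) δ_{k,1} + N_k(u)` with `P_k w = k^m w − Σ x^α c_{j,α}(x) k^j ∂ₓ^α w`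
(`linPart m c k`) and `N_k(u)` (`nonlinCoeff m A u k`) the `t^k`-coefficient of `R₂`. Since
`u₀ = 0` makes every `(t∂ₜ)^j ∂ₓ^α u` divisible by `t` and `R₂` has degree `≥ 2` in `(t, z)`,
`N_k(u)` only involves `u_1, …, u_{k-1}`. As `x^α ∂ₓ^α x^l = l(l-1)⋯(l-α+1) x^l`, the operator
`P_k` is lower triangular on the `x`-coefficients with diagonal entries `L(k, l)`, hence
bijective for `k ≥ 1` by (N). Both the `x`-recursion inverting `P_k` and the `t`-recursion for
`u_k` are instances of the fact that a sequence prescribed term by term in terms of its earlier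
terms exists and is unique.
-/

open PowerSeries Finset
open scoped Classical

noncomputable section

/-- The index set `I_m = {(j,α) ∈ ℕ×ℕ : j+α ≤ m, j < m}` as a finset. -/
def ImF (m : ℕ) : Finset (ℕ × ℕ) :=
  (Finset.range (m + 1) ×ˢ Finset.range (m + 1)).filter fun p => p.1 + p.2 ≤ m ∧ p.1 < m

/-- Coefficientwise derivative `∂ₓ` on `ℂ[[x]]`. -/
def dX (f : PowerSeries ℂ) : PowerSeries ℂ :=
  PowerSeries.mk fun l => ((l + 1 : ℕ) : ℂ) * PowerSeries.coeff (l + 1) f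

/-- `|ν| = Σ_{(j,α)} ν_{j,α}` for a multi-index `ν`. -/
def nsum (ν : (ℕ × ℕ) →₀ ℕ) : ℕ := ν.sum fun _ n => n

/-- `(t∂ₜ)^j ∂ₓ^α u` as an element of `ℂ[[x]][[t]]`, for `u` given by its family of
`t`-coefficients `u_k(x) ∈ ℂ[[x]]`. -/
def Dop (j α : ℕ) (u : ℕ → PowerSeries ℂ) : PowerSeries (PowerSeries ℂ) :=
  PowerSeries.mk fun k => ((k : ℂ) ^ j) • (dX^[α] (u k))

/-- `u = Σ_k u_k(x) t^k` is a formal power series solution, with `u(0,x) ≡ 0`, of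
`(t∂ₜ)^m u = F(t,x,{(t∂ₜ)^j ∂ₓ^α u}_{(j,α) ∈ I_m})`, where the holomorphic function `F`
is given through its Taylor expansion
`F(t,x,z) = a(x) t + Σ_{(j,α) ∈ I_m} x^α c_{j,α}(x) z_{j,α} + Σ_{i+|ν| ≥ 2} a_{i,ν}(x) t^i z^ν`
(this encodes the assumptions (A₂) and (A₃): `F(0,x,0) ≡ 0` and `b_{j,α}(x) = x^α c_{j,α}(x)`).
The equation is stated on the coefficient of each power `t^k`; since `u(0,x) ≡ 0` the
nonlinear part only involves the finitely many multi-indices appearing in the sum. -/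
def IsSol (m : ℕ) (a : PowerSeries ℂ) (c : ℕ × ℕ → PowerSeries ℂ)
    (A : ℕ → ((ℕ × ℕ) →₀ ℕ) → PowerSeries ℂ) (u : ℕ → PowerSeries ℂ) : Prop :=
  u 0 = 0 ∧ ∀ k : ℕ,
    ((k : ℂ) ^ m) • u k =
      (if k = 1 then a else 0)
        + ∑ p ∈ ImF m, (X ^ p.2 * c p) * (((k : ℂ) ^ p.1) • (dX^[p.2] (u k)))
        + ∑ i ∈ Finset.range (k + 1), ∑ n ∈ Finset.range (k + 1),
            ∑ ν ∈ Finset.finsuppAntidiag (ImF m) n,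
              A i ν * (PowerSeries.coeff (R := PowerSeries ℂ) (k - i))
                  (∏ p ∈ ImF m, Dop p.1 p.2 u ^ ν p)

/-- (A₁): Cauchy-type estimates on all the Taylor data of `F`, expressing that `F` is
holomorphic on a polydisk centered at the origin of `ℂ_t × ℂ_x × ℂ^N_z`. -/
def HoloData (a : PowerSeries ℂ) (c : ℕ × ℕ → PowerSeries ℂ)
    (A : ℕ → ((ℕ × ℕ) →₀ ℕ) → PowerSeries ℂ) : Prop :=
  ∃ M r : ℝ, 0 < r ∧
    (∀ l, ‖PowerSeries.coeff (R := ℂ) l a‖ ≤ M / r ^ l) ∧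
    (∀ p l, ‖PowerSeries.coeff (R := ℂ) l (c p)‖ ≤ M / r ^ l) ∧
    (∀ i ν l, ‖PowerSeries.coeff (R := ℂ) l (A i ν)‖ ≤ M / r ^ (i + nsum ν + l))

/-- `R₂(t,x,z) = Σ a_{i,ν}(x) t^i z^ν` consists only of terms of total degree `≥ 2`
in `(t,z)`, with `z` indexed by `I_m`. -/
def StructA (m : ℕ) (A : ℕ → ((ℕ × ℕ) →₀ ℕ) → PowerSeries ℂ) : Prop :=
  ∀ i ν, A i ν ≠ 0 → 2 ≤ i + nsum ν ∧ ν.support ⊆ ImF m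

/-- `L(λ,ρ) = λ^m − Σ_{(j,α) ∈ I_m} c_{j,α}(0) λ^j ρ(ρ−1)⋯(ρ−α+1)`, evaluated at `(k,l)`. -/
def Lfun (m : ℕ) (c : ℕ × ℕ → PowerSeries ℂ) (k l : ℕ) : ℂ :=
  (k : ℂ) ^ m - ∑ p ∈ ImF m, PowerSeries.constantCoeff (R := ℂ) (c p) * (k : ℂ) ^ p.1 *
      ∏ i ∈ Finset.range p.2, ((l : ℂ) - (i : ℂ))

/-- The non-resonance condition (N). -/
def Ncond (m : ℕ) (c : ℕ × ℕ → PowerSeries ℂ) : Prop :=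
  ∀ k l : ℕ, 1 ≤ k → Lfun m c k l ≠ 0

theorem existsUnique_forall_eq_of_dependsOn_lt {α : Type*} [Nonempty α]
    (Φ : ℕ → (ℕ → α) → α) (hΦ : ∀ k x y, (∀ i < k, x i = y i) → Φ k x = Φ k y) :
    ∃! x : ℕ → α, ∀ k, x k = Φ k x := by
  let x : ℕ → α := Nat.strongRec fun k rec =>
    Φ k fun i => if hi : i < k then rec i hi else Classical.arbitrary α
  have hx : ∀ k, x k = Φ k x := fun k => by
    rw [show x k = _ from Nat.strongRec_eq _ k]
    exact hΦ k _ _ fun i hi => by simp only [dif_pos hi]; rfl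
  refine ⟨x, hx, fun y hy => funext fun k => ?_⟩
  induction k using Nat.strong_induction_on with
  | _ k ih => rw [hy k, hx k, hΦ k y x ih]

theorem PowerSeries.bijective_of_triangular {K : Type*} [Field K] (T : K⟦X⟧ →+ K⟦X⟧)
    (d : ℕ → K) (hd : ∀ l, d l ≠ 0) (hT : ∀ l w, X ^ l ∣ w → coeff l (T w) = d l * coeff l w) :
    Function.Bijective T := by
  have hsplit : ∀ l w, coeff l (T w) = coeff l (T (trunc l w)) + d l * coeff l w := by
    intro l w
    have h := hT l (w - trunc l w) <| X_pow_dvd_iff.2 fun i hi => by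
      simp [Polynomial.coeff_coe, coeff_trunc, hi]
    simp only [map_sub, Polynomial.coeff_coe, coeff_trunc, lt_irrefl, if_false, sub_zero] at h
    linear_combination h
  refine (Function.bijective_iff_existsUnique T).2 fun g => ?_
  let Φ : ℕ → (ℕ → K) → K := fun l x => (coeff l g - coeff l (T (trunc l (mk x)))) / d l
  have hΦ : ∀ l x y, (∀ i < l, x i = y i) → Φ l x = Φ l y := by
    intro l x y h
    have : trunc l (mk x) = trunc l (mk y) := by
      ext i; simp only [coeff_trunc, coeff_mk]; split_ifs with hi <;> simp [h i, hi]
    simp only [Φ, this]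
  have hmk : ∀ w : K⟦X⟧, mk (fun i => coeff i w) = w := fun w => ext fun _ => coeff_mk _ _
  have hsol : ∀ w, T w = g ↔ ∀ l, coeff l w = Φ l fun i => coeff i w := by
    intro w
    simp only [PowerSeries.ext_iff, Φ, hmk, eq_div_iff (hd _), hsplit _ w]
    exact forall_congr' fun l => ⟨fun h => by linear_combination h, fun h => by linear_combination h⟩
  obtain ⟨x, hx, hx_unique⟩ := existsUnique_forall_eq_of_dependsOn_lt Φ hΦ
  refine ⟨mk x, (hsol _).2 (by simpa using hx), fun w hw => ?_⟩
  ext l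
  rw [coeff_mk, ← hx_unique _ ((hsol w).1 hw)]

theorem dX_add (f g : ℂ⟦X⟧) : dX (f + g) = dX f + dX g := by
  ext l; simp [dX, mul_add]

theorem iterate_dX_add (α : ℕ) (f g : ℂ⟦X⟧) : dX^[α] (f + g) = dX^[α] f + dX^[α] g :=
  iterate_map_add (AddMonoidHom.mk' dX dX_add) α f g

theorem coeff_iterate_dX (α l : ℕ) (f : ℂ⟦X⟧) :
    coeff l (dX^[α] f) = ((l + α).descFactorial α : ℂ) * coeff (l + α) f := by
  induction α generalizing f with
  | zero => simp
  | succ α ih =>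
    rw [Function.iterate_succ_apply, ih, dX, coeff_mk, ← add_assoc, Nat.succ_descFactorial_succ]
    push_cast
    ring

theorem coeff_X_pow_mul_iterate_dX (α l : ℕ) (f : ℂ⟦X⟧) :
    coeff l (X ^ α * dX^[α] f) = (l.descFactorial α : ℂ) * coeff l f := by
  rcases le_or_gt α l with h | h
  · obtain ⟨d, rfl⟩ := Nat.exists_eq_add_of_le' h
    rw [coeff_X_pow_mul, coeff_iterate_dX]
  · rw [coeff_X_pow_mul', if_neg (by omega), Nat.descFactorial_eq_zero_iff_lt.2 h]
    simp

theorem coeff_mul_of_X_pow_dvd {R : Type*} [CommSemiring R] {l : ℕ} (f : R⟦X⟧) {g : R⟦X⟧}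
    (hg : X ^ l ∣ g) : coeff l (f * g) = constantCoeff f * coeff l g := by
  obtain ⟨h, rfl⟩ := hg
  simp only [mul_left_comm f, coeff_X_pow_mul', le_refl, if_true, Nat.sub_self,
    coeff_zero_eq_constantCoeff, map_mul]

def linPart (m : ℕ) (c : ℕ × ℕ → ℂ⟦X⟧) (k : ℕ) : ℂ⟦X⟧ →+ ℂ⟦X⟧ :=
  AddMonoidHom.mk'
    (fun w => ((k : ℂ) ^ m) • w - ∑ p ∈ ImF m, (X ^ p.2 * c p) * (((k : ℂ) ^ p.1) • dX^[p.2] w))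
    fun v w => by
      simp only [iterate_dX_add, smul_add, mul_add, sum_add_distrib]
      abel

theorem coeff_linPart {m : ℕ} {c : ℕ × ℕ → ℂ⟦X⟧} {k l : ℕ} {w : ℂ⟦X⟧} (hw : X ^ l ∣ w) :
    coeff l (linPart m c k w) = Lfun m c k l * coeff l w := by
  have hterm : ∀ p : ℕ × ℕ, (X ^ p.2 * c p) * (((k : ℂ) ^ p.1) • dX^[p.2] w)
      = c p * (((k : ℂ) ^ p.1) • (X ^ p.2 * dX^[p.2] w)) := fun p => by
    rw [mul_smul_comm, mul_smul_comm, mul_assoc, mul_left_comm]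
  have hdvd : ∀ p : ℕ × ℕ, X ^ l ∣ ((k : ℂ) ^ p.1) • (X ^ p.2 * dX^[p.2] w) := fun p =>
    X_pow_dvd_iff.2 fun i hi => by
      rw [coeff_smul, coeff_X_pow_mul_iterate_dX, X_pow_dvd_iff.1 hw i hi, mul_zero, smul_zero]
  have hdesc : ∀ α, ∏ i ∈ range α, ((l : ℂ) - i) = l.descFactorial α := fun α => by
    rw [← descPochhammer_eval_eq_prod_range, descPochhammer_eval_eq_descFactorial]
  simp only [linPart, AddMonoidHom.mk'_apply, hterm, map_sub, map_sum, coeff_smul,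
    coeff_mul_of_X_pow_dvd _ (hdvd _), coeff_X_pow_mul_iterate_dX, Lfun, hdesc, smul_eq_mul,
    sub_mul, sum_mul]
  congr 1
  exact sum_congr rfl fun p _ => by ring

theorem linPart_bijective {m : ℕ} {c : ℕ × ℕ → ℂ⟦X⟧} (hN : Ncond m c) {k : ℕ} (hk : 1 ≤ k) :
    Function.Bijective (linPart m c k) :=
  bijective_of_triangular _ _ (fun l => hN k l hk) fun _ _ => coeff_linPart

theorem dvd_prod_pow_sub_prod_pow {R ι : Type*} [CommRing R] {x : R} (s : Finset ι) (ν : ι → ℕ)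
    {F G : ι → R} (h : ∀ i ∈ s, x ∣ F i - G i) :
    x ∣ ∏ i ∈ s, F i ^ ν i - ∏ i ∈ s, G i ^ ν i := by
  simp only [← Ideal.mem_span_singleton, ← SModEq.sub_mem] at h ⊢
  exact SModEq.prod fun i hi => (h i hi).pow _

def nonlinCoeff (m : ℕ) (A : ℕ → ((ℕ × ℕ) →₀ ℕ) → ℂ⟦X⟧) (u : ℕ → ℂ⟦X⟧) (k : ℕ) : ℂ⟦X⟧ :=
  ∑ i ∈ range (k + 1), ∑ n ∈ range (k + 1), ∑ ν ∈ finsuppAntidiag (ImF m) n,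
    A i ν * coeff (R := ℂ⟦X⟧) (k - i) (∏ p ∈ ImF m, Dop p.1 p.2 u ^ ν p)

theorem Dop_eq_X_mul {u : ℕ → ℂ⟦X⟧} (hu : u 0 = 0) (j α : ℕ) :
    Dop j α u = X * PowerSeries.mk fun e => (((e + 1 : ℕ) : ℂ) ^ j) • dX^[α] (u (e + 1)) := by
  ext (_ | e) : 1
  · simp [Dop, hu, Function.iterate_fixed (show dX 0 = 0 by ext; simp [dX])]
  · simp [Dop, coeff_succ_X_mul]

theorem X_pow_dvd_prod_Dop_pow_sub {u v : ℕ → ℂ⟦X⟧} {k : ℕ} (hu : u 0 = 0) (hv : v 0 = 0)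
    (huv : ∀ i < k, u i = v i) (s : Finset (ℕ × ℕ)) (ν : ℕ × ℕ → ℕ) :
    X ^ (∑ p ∈ s, ν p + (k - 1)) ∣
      ∏ p ∈ s, Dop p.1 p.2 u ^ ν p - ∏ p ∈ s, Dop p.1 p.2 v ^ ν p := by
  simp only [Dop_eq_X_mul hu, Dop_eq_X_mul hv, mul_pow, prod_mul_distrib, prod_pow_eq_pow_sum,
    ← mul_sub, pow_add]
  refine mul_dvd_mul_left _ (dvd_prod_pow_sub_prod_pow s ν fun p _ => X_pow_dvd_iff.2 ?_)
  intro e he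
  simp [huv (e + 1) (by omega)]

theorem nonlinCoeff_congr {m : ℕ} {A : ℕ → ((ℕ × ℕ) →₀ ℕ) → ℂ⟦X⟧} (hA : StructA m A)
    {u v : ℕ → ℂ⟦X⟧} {k : ℕ} (hu : u 0 = 0) (hv : v 0 = 0) (huv : ∀ i < k, u i = v i) :
    nonlinCoeff m A u k = nonlinCoeff m A v k := by
  refine sum_congr rfl fun i hi => sum_congr rfl fun n _ => sum_congr rfl fun ν hν => ?_
  by_cases hAν : A i ν = 0
  · simp [hAν]
  have hdeg := (hA i ν hAν).1
  have hn : nsum ν = n := (mem_finsuppAntidiag'.1 hν).1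
  have hsum : ∑ p ∈ ImF m, ν p = n := (mem_finsuppAntidiag.1 hν).1
  -- `k - i < |ν| + (k - 1)` is exactly the degree condition `i + |ν| ≥ 2`
  have h := X_pow_dvd_iff.1 (X_pow_dvd_prod_Dop_pow_sub hu hv huv (ImF m) ν) (k - i)
    (by rw [mem_range] at hi; omega)
  rw [map_sub, sub_eq_zero] at h
  rw [h]

theorem nonlinCoeff_zero {m : ℕ} {A : ℕ → ((ℕ × ℕ) →₀ ℕ) → ℂ⟦X⟧} (hA : StructA m A)
    (u : ℕ → ℂ⟦X⟧) : nonlinCoeff m A u 0 = 0 := by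
  refine sum_eq_zero fun i hi => sum_eq_zero fun n hn => sum_eq_zero fun ν hν => ?_
  by_contra hne
  have hdeg := (hA i ν (left_ne_zero_of_mul hne)).1
  have hnsum : nsum ν = n := (mem_finsuppAntidiag'.1 hν).1
  simp only [zero_add, range_one, mem_singleton] at hi hn
  omega

/-- The nonlinear term reads `u` through `update u 0 0` because it depends only on lower
coefficients when `u₀ = 0`. -/
def nextCoeff (m : ℕ) (a : ℂ⟦X⟧) (c : ℕ × ℕ → ℂ⟦X⟧) (A : ℕ → ((ℕ × ℕ) →₀ ℕ) → ℂ⟦X⟧)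
    (k : ℕ) (u : ℕ → ℂ⟦X⟧) : ℂ⟦X⟧ :=
  if k = 0 then 0
  else Function.invFun (linPart m c k)
    ((if k = 1 then a else 0) + nonlinCoeff m A (Function.update u 0 0) k)

theorem nextCoeff_congr {m : ℕ} {a : ℂ⟦X⟧} {c : ℕ × ℕ → ℂ⟦X⟧}
    {A : ℕ → ((ℕ × ℕ) →₀ ℕ) → ℂ⟦X⟧} (hA : StructA m A) (k : ℕ) (u v : ℕ → ℂ⟦X⟧)
    (huv : ∀ i < k, u i = v i) : nextCoeff m a c A k u = nextCoeff m a c A k v := by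
  have hupd : ∀ i < k, Function.update u 0 0 i = Function.update v 0 0 i := fun i hi => by
    rcases eq_or_ne i 0 with rfl | hi0
    · simp
    · simp [hi0, huv i hi]
  simp only [nextCoeff, nonlinCoeff_congr hA (by simp) (by simp) hupd]

theorem isSol_iff_linPart {m : ℕ} {a : ℂ⟦X⟧} {c : ℕ × ℕ → ℂ⟦X⟧}
    {A : ℕ → ((ℕ × ℕ) →₀ ℕ) → ℂ⟦X⟧} {u : ℕ → ℂ⟦X⟧} :
    IsSol m a c A u ↔
      u 0 = 0 ∧ ∀ k, linPart m c k (u k) = (if k = 1 then a else 0) + nonlinCoeff m A u k := by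
  refine and_congr_right' (forall_congr' fun k => ?_)
  simp only [linPart, AddMonoidHom.mk'_apply, nonlinCoeff]
  exact ⟨fun h => by linear_combination h, fun h => by linear_combination h⟩

theorem isSol_iff_forall_eq_nextCoeff {m : ℕ} {a : ℂ⟦X⟧} {c : ℕ × ℕ → ℂ⟦X⟧}
    {A : ℕ → ((ℕ × ℕ) →₀ ℕ) → ℂ⟦X⟧} (hA : StructA m A) (hN : Ncond m c) (u : ℕ → ℂ⟦X⟧) :
    IsSol m a c A u ↔ ∀ k, u k = nextCoeff m a c A k u := by
  rw [isSol_iff_linPart]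
  constructor
  · rintro ⟨hu0, heq⟩ (_ | k)
    · simp [nextCoeff, hu0]
    · have hT := linPart_bijective hN (Nat.succ_pos k)
      rw [nextCoeff, if_neg k.succ_ne_zero, Function.update_eq_self_iff.2 hu0.symm, ← heq,
        Function.leftInverse_invFun hT.1]
  · intro h
    have hu0 : u 0 = 0 := by simpa [nextCoeff] using h 0
    refine ⟨hu0, fun k => ?_⟩
    rcases Nat.eq_zero_or_pos k with rfl | hk
    · simp [hu0, nonlinCoeff_zero hA]
    · rw [h k, nextCoeff, if_neg hk.ne', Function.update_eq_self_iff.2 hu0.symm]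
      exact Function.invFun_eq ((linPart_bijective hN hk).2 _)

theorem formal_solution_exists_unique_general (m : ℕ)
    (a : PowerSeries ℂ) (c : ℕ × ℕ → PowerSeries ℂ)
    (A : ℕ → ((ℕ × ℕ) →₀ ℕ) → PowerSeries ℂ)
    (hA2 : StructA m A) (hN : Ncond m c) :
    ∃! u : ℕ → PowerSeries ℂ, IsSol m a c A u :=
  (existsUnique_congr (isSol_iff_forall_eq_nextCoeff hA2 hN)).2 <|
    existsUnique_forall_eq_of_dependsOn_lt _ (nextCoeff_congr hA2)

/-- **Proposition 1.1** (Maillet type theorem paper, Lastra–Tahara).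
Under the assumptions (A₁), (A₂), (A₃) and the non-resonance condition (N), the equation
`(t∂ₜ)^m u = F(t,x,{(t∂ₜ)^j ∂ₓ^α u}_{(j,α) ∈ I_m})` admits a unique formal power series
solution `u(t,x) ∈ ℂ[[t,x]]` with `u(0,x) ≡ 0`. -/
theorem formal_solution_exists_unique (m : ℕ) (hm : 1 ≤ m)
    (a : PowerSeries ℂ) (c : ℕ × ℕ → PowerSeries ℂ)
    (A : ℕ → ((ℕ × ℕ) →₀ ℕ) → PowerSeries ℂ)
    (hA1 : HoloData a c A) (hA2 : StructA m A) (hN : Ncond m c) :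
    ∃! u : ℕ → PowerSeries ℂ, IsSol m a c A u :=
  formal_solution_exists_unique_general m a c A hA2 hN
end
end

section
/- Let f(x), g(x) ∈ ℂ[[x]], σ ≥ 1 and m ∈ ℕ. Then: (i) B_σ[|f|](x) = B_σ^{(0)}[|f|](x) ≪ B_σ^{(1)}[|f|](x) ≪ B_σ^{(2)}[|f|](x) ≪ ⋯; (ii) B_σ^{(m)}[fg](x) ≪ B_σ^{(m)}[|f|](x) · B_σ^{(m)}[|g|](x); (iii) B_σ^{(m)}[x^k f](x) = x^k B_σ^{(m−k)}[f](x) for every 1 ≤ k ≤ m. -/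
open PowerSeries

noncomputable section

/-- `|f|(x) = Σ |f_l| x^l` for a complex formal power series `f`. -/
def absS (f : PowerSeries ℂ) : PowerSeries ℝ :=
  PowerSeries.mk fun l => ‖PowerSeries.coeff l f‖

/-- The modified formal Borel transform
`B_σ^{(m)}[f](x) = Σ_{l≥0} (f_l/([l−m]₊!)^{σ−1}) x^l` (real coefficients). -/
def BorR (σ : ℝ) (m : ℕ) (f : PowerSeries ℝ) : PowerSeries ℝ :=
  PowerSeries.mk fun l => PowerSeries.coeff l f / ((l - m).factorial : ℝ) ^ (σ - 1)

/-- The modified formal Borel transform (complex coefficients). -/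
def BorC (σ : ℝ) (m : ℕ) (f : PowerSeries ℂ) : PowerSeries ℂ :=
  PowerSeries.mk fun l =>
    PowerSeries.coeff l f / (((((l - m).factorial : ℝ) ^ (σ - 1) : ℝ) : ℂ))

/-- `g ≪ h`: every coefficient of `h − g` is nonnegative. -/
def lleR (g h : PowerSeries ℝ) : Prop :=
  ∀ l, PowerSeries.coeff l g ≤ PowerSeries.coeff l h

/-- Coefficientwise derivative `∂ₓ` on `ℝ[[x]]`. -/
def dXR (f : PowerSeries ℝ) : PowerSeries ℝ :=
  PowerSeries.mk fun l => ((l + 1 : ℕ) : ℝ) * PowerSeries.coeff (l + 1) f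

/-- The plain formal Borel transform `B_σ[f](x) = Σ (f_l/l!^{σ−1}) x^l`. -/
def BorPlainR (σ : ℝ) (f : PowerSeries ℝ) : PowerSeries ℝ :=
  PowerSeries.mk fun l => PowerSeries.coeff l f / (l.factorial : ℝ) ^ (σ - 1)

/- The weights `([l−m]₊!)^{σ−1}` are monotone in `l` and submultiplicative along antidiagonals,
`[i−m]₊! [j−m]₊! ≤ [i+j−m]₊!`, since `a! b! ∣ (a+b)!`. With nonnegative coefficients this gives
the product estimate; the shift identity is reindexing, as `[(d+k)−m]₊ = [d−(m−k)]₊`. -/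

theorem Nat.factorial_tsub_mul_factorial_tsub_le (i j m : ℕ) :
    (i - m).factorial * (j - m).factorial ≤ (i + j - m).factorial :=
  calc (i - m).factorial * (j - m).factorial
      ≤ ((i - m) + (j - m)).factorial :=
        Nat.le_of_dvd (Nat.factorial_pos _) (Nat.factorial_mul_factorial_dvd_factorial_add _ _)
    _ ≤ (i + j - m).factorial := Nat.factorial_le (by omega)

theorem factorial_rpow_le_factorial_rpow {s : ℝ} (hs : 0 ≤ s) {a b : ℕ} (hab : a ≤ b) :
    (a.factorial : ℝ) ^ s ≤ (b.factorial : ℝ) ^ s :=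
  Real.rpow_le_rpow (by positivity) (by exact_mod_cast Nat.factorial_le hab) hs

theorem coeff_absS_nonneg (f : PowerSeries ℂ) (l : ℕ) : 0 ≤ coeff l (absS f) := by
  simp only [absS, coeff_mk]
  positivity

theorem norm_coeff_BorC (σ : ℝ) (m : ℕ) (f : PowerSeries ℂ) (l : ℕ) :
    ‖coeff l (BorC σ m f)‖ = coeff l (BorR σ m (absS f)) := by
  have hc : (0 : ℝ) < ((l - m).factorial : ℝ) ^ (σ - 1) := by positivity
  simp only [BorC, BorR, absS, coeff_mk]
  rw [norm_div, Complex.norm_real, Real.norm_eq_abs, abs_of_pos hc]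

theorem lleR_absS_mul (f g : PowerSeries ℂ) : lleR (absS (f * g)) (absS f * absS g) := by
  intro l
  simp only [absS, coeff_mk, coeff_mul, ← norm_mul]
  exact norm_sum_le _ _

theorem BorPlainR_eq_BorR_zero (σ : ℝ) (F : PowerSeries ℝ) : BorPlainR σ F = BorR σ 0 F := by
  ext l
  simp [BorPlainR, BorR]

theorem BorR_mono (σ : ℝ) (m : ℕ) {F G : PowerSeries ℝ} (hFG : lleR F G) :
    lleR (BorR σ m F) (BorR σ m G) := by
  intro l
  simp only [BorR, coeff_mk]
  exact div_le_div_of_nonneg_right (hFG l) (by positivity)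

theorem lleR_BorR_succ {σ : ℝ} (hσ : 1 ≤ σ) (n : ℕ) {F : PowerSeries ℝ}
    (hF : ∀ l, 0 ≤ coeff l F) : lleR (BorR σ n F) (BorR σ (n + 1) F) := by
  intro l
  simp only [BorR, coeff_mk]
  exact div_le_div_of_nonneg_left (hF l) (by positivity)
    (factorial_rpow_le_factorial_rpow (by linarith) (by omega))

theorem lleR_BorR_mul {σ : ℝ} (hσ : 1 ≤ σ) (m : ℕ) {F G : PowerSeries ℝ}
    (hF : ∀ l, 0 ≤ coeff l F) (hG : ∀ l, 0 ≤ coeff l G) :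
    lleR (BorR σ m (F * G)) (BorR σ m F * BorR σ m G) := by
  intro l
  simp only [BorR, coeff_mk, coeff_mul, Finset.sum_div]
  refine Finset.sum_le_sum fun p hp => ?_
  have hpl : p.1 + p.2 = l := Finset.HasAntidiagonal.mem_antidiagonal.mp hp
  have hweight : ((p.1 - m).factorial : ℝ) ^ (σ - 1) * ((p.2 - m).factorial : ℝ) ^ (σ - 1)
      ≤ ((l - m).factorial : ℝ) ^ (σ - 1) := by
    rw [← Real.mul_rpow (by positivity) (by positivity), ← hpl]
    exact Real.rpow_le_rpow (by positivity)
      (by exact_mod_cast Nat.factorial_tsub_mul_factorial_tsub_le p.1 p.2 m) (by linarith)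
  rw [div_mul_div_comm]
  exact div_le_div_of_nonneg_left (mul_nonneg (hF _) (hG _)) (by positivity) hweight

theorem BorC_X_pow_mul (σ : ℝ) {m k : ℕ} (hkm : k ≤ m) (f : PowerSeries ℂ) :
    BorC σ m (X ^ k * f) = X ^ k * BorC σ (m - k) f := by
  ext l
  simp only [BorC, coeff_mk]
  rcases le_or_gt k l with hkl | hlk
  · obtain ⟨d, rfl⟩ : ∃ d, l = d + k := ⟨l - k, by omega⟩
    rw [coeff_X_pow_mul, coeff_X_pow_mul, coeff_mk, show d + k - m = d - (m - k) by omega]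
  · simp [coeff_X_pow_mul', not_le.mpr hlk]

/-- **Lemma 3.1** (Lastra–Tahara). For `f, g ∈ ℂ[[x]]`, `σ ≥ 1` and `m ∈ ℕ`:
(i) `B_σ[|f|] = B_σ^{(0)}[|f|] ≪ B_σ^{(1)}[|f|] ≪ B_σ^{(2)}[|f|] ≪ ⋯`;
(ii) `B_σ^{(m)}[fg] ≪ B_σ^{(m)}[|f|] ⋅ B_σ^{(m)}[|g|]`;
(iii) `B_σ^{(m)}[x^k f] = x^k B_σ^{(m−k)}[f]` for `1 ≤ k ≤ m`. -/
theorem borel_basic_properties (σ : ℝ) (hσ : 1 ≤ σ) (m : ℕ) (f g : PowerSeries ℂ) :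
    (BorPlainR σ (absS f) = BorR σ 0 (absS f)) ∧
    (∀ n : ℕ, lleR (BorR σ n (absS f)) (BorR σ (n + 1) (absS f))) ∧
    (∀ l : ℕ, ‖PowerSeries.coeff l (BorC σ m (f * g))‖ ≤
        PowerSeries.coeff l (BorR σ m (absS f) * BorR σ m (absS g))) ∧
    (∀ k : ℕ, 1 ≤ k → k ≤ m → BorC σ m (X ^ k * f) = X ^ k * BorC σ (m - k) f) := by
  refine ⟨BorPlainR_eq_BorR_zero σ _, fun n => lleR_BorR_succ hσ n (coeff_absS_nonneg f),
    fun l => ?_, fun k _ hkm => BorC_X_pow_mul σ hkm f⟩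
  rw [norm_coeff_BorC]
  exact (BorR_mono σ m (lleR_absS_mul f g) l).trans
    (lleR_BorR_mul hσ m (coeff_absS_nonneg f) (coeff_absS_nonneg g) l)
end
end

section
/- Let m ∈ ℕ*, 0 < R ≤ 1, σ ≥ 1, and suppose f(x) ∈ ℂ[[x]] satisfies B_σ^{(m)}[|f|](x) ≪ C/(R−x)^a for some C > 0 and a ≥ 1. Then B_σ^{(m−1)}[∂ₓ|f|](x) ≪ aC/(R−x)^{a+1} and B_σ^{(m)}[∂ₓ|f|](x) ≪ (a+σ)^σ e^σ C/(R−x)^{a+σ}. -/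
open PowerSeries

noncomputable section

/-- The formal power series `C/(R−x)^a = Σ_{j≥0} (C/R^{a+j}) (a(a+1)⋯(a+j−1)/j!) x^j`. -/
def geomPow (C R a : ℝ) : PowerSeries ℝ :=
  PowerSeries.mk fun j =>
    C / R ^ (a + (j : ℝ)) * ((∏ i ∈ Finset.range j, (a + (i : ℝ))) / (j.factorial : ℝ))

/-! Differentiating termwise, `∂ₓ C/(R−x)^a = aC/(R−x)^{a+1}`, and lowering the Borel index by
one exactly compensates the shift `l ↦ l+1` of the derivative; this is the first bound.
For the second, `(l+1−m)! ≤ (l+1)·(l−m)!` costs a factor `(l+1)^{σ−1}` per coefficient, which is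
absorbed by raising the exponent of the majorant from `a+1` to `a+σ`: with `s = σ−1`,
`(l+1)^s (b)_l ≤ (b+s)^s (b+s)_l`, where `(b)_l = b(b+1)⋯(b+l−1)`. This follows by induction
from `(b+s+l)^s (b)_l ≤ (b+s)^s (b+s)_l`, whose step is `((x+1)/x)^s ≤ e^{s/x} ≤ x/(x−s)`. -/

open Finset

lemma factorial_sub_le_succ_mul_factorial_sub_succ (l k : ℕ) :
    (l - k).factorial ≤ (l + 1) * (l - (k + 1)).factorial := by
  rcases Nat.eq_zero_or_pos (l - k) with h | h
  · rw [h, Nat.factorial_zero]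
    exact Nat.one_le_iff_ne_zero.mpr (by positivity)
  · rw [← Nat.mul_factorial_pred h.ne', Nat.sub_sub]
    exact Nat.mul_le_mul_right _ (by omega)

lemma coeff_BorR_succ_le {σ : ℝ} (hσ : 1 ≤ σ) (k : ℕ) {g : PowerSeries ℝ} {l : ℕ}
    (hg : 0 ≤ coeff l g) :
    coeff l (BorR σ (k + 1) g) ≤ ((l : ℝ) + 1) ^ (σ - 1) * coeff l (BorR σ k g) := by
  simp only [BorR, coeff_mk]
  have hfact : ((l - k).factorial : ℝ) ^ (σ - 1)
      ≤ ((l : ℝ) + 1) ^ (σ - 1) * ((l - (k + 1)).factorial : ℝ) ^ (σ - 1) := by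
    rw [← Real.mul_rpow (by positivity) (by positivity)]
    gcongr
    exact_mod_cast factorial_sub_le_succ_mul_factorial_sub_succ l k
  calc coeff l g / ((l - (k + 1)).factorial : ℝ) ^ (σ - 1)
      = ((l : ℝ) + 1) ^ (σ - 1) * coeff l g
          / (((l : ℝ) + 1) ^ (σ - 1) * ((l - (k + 1)).factorial : ℝ) ^ (σ - 1)) := by
        rw [mul_div_mul_left _ _ (by positivity)]
    _ ≤ ((l : ℝ) + 1) ^ (σ - 1) * coeff l g / ((l - k).factorial : ℝ) ^ (σ - 1) := by
        gcongr
    _ = _ := mul_div_assoc _ _ _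

lemma BorR_dXR (σ : ℝ) (k : ℕ) (g : PowerSeries ℝ) :
    BorR σ k (dXR g) = dXR (BorR σ (k + 1) g) := by
  ext l
  simp only [BorR, dXR, coeff_mk, Nat.add_sub_add_right, mul_div_assoc]

lemma dXR_mono {g h : PowerSeries ℝ} (hgh : lleR g h) : lleR (dXR g) (dXR h) := fun l => by
  simp only [dXR, coeff_mk]
  exact mul_le_mul_of_nonneg_left (hgh (l + 1)) (Nat.cast_nonneg _)

lemma prod_range_succ_add_natCast (a : ℝ) (l : ℕ) :
    ∏ i ∈ range (l + 1), (a + i) = a * ∏ i ∈ range l, (a + 1 + i) := by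
  rw [prod_range_succ', mul_comm]
  push_cast
  simp only [add_zero, add_comm (1 : ℝ), add_assoc]

lemma dXR_geomPow (C R a : ℝ) : dXR (geomPow C R a) = geomPow (a * C) R (a + 1) := by
  ext l
  simp only [dXR, geomPow, coeff_mk, prod_range_succ_add_natCast, Nat.factorial_succ]
  push_cast
  rw [show a + ((l : ℝ) + 1) = a + 1 + l by ring]
  field_simp

lemma geomPow_mono_left {C C' : ℝ} {R a : ℝ} (hR : 0 < R) (ha : 0 ≤ a) (hC : C ≤ C') :
    lleR (geomPow C R a) (geomPow C' R a) := fun l => by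
  simp only [geomPow, coeff_mk]
  gcongr

lemma add_one_rpow_mul_sub_le {x : ℝ} (s : ℝ) (hx : 0 < x) (hs : 0 ≤ s) :
    (x + 1) ^ s * (x - s) ≤ x ^ s * x := by
  have hexp : (1 + x⁻¹) ^ s ≤ Real.exp (s / x) := by
    calc (1 + x⁻¹) ^ s ≤ Real.exp x⁻¹ ^ s := by
          gcongr
          linarith [Real.add_one_le_exp x⁻¹]
      _ = Real.exp (s / x) := by rw [← Real.exp_mul, inv_mul_eq_div]
  have hlin : x - s ≤ x * Real.exp (-(s / x)) := by
    calc x - s = x * (-(s / x) + 1) := by field_simp; ring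
      _ ≤ _ := by gcongr; exact Real.add_one_le_exp _
  calc (x + 1) ^ s * (x - s) ≤ (x + 1) ^ s * (x * Real.exp (-(s / x))) := by gcongr
    _ = x ^ s * (1 + x⁻¹) ^ s * (x * Real.exp (-(s / x))) := by
        rw [← Real.mul_rpow hx.le (by positivity), mul_add, mul_one, mul_inv_cancel₀ hx.ne']
    _ ≤ x ^ s * Real.exp (s / x) * (x * Real.exp (-(s / x))) := by gcongr
    _ = x ^ s * x := by rw [Real.exp_neg]; field_simp

lemma rpow_mul_prod_range_le {b s : ℝ} (hb : 0 < b) (hs : 0 ≤ s) (l : ℕ) :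
    (b + s + l) ^ s * ∏ i ∈ range l, (b + i) ≤ (b + s) ^ s * ∏ i ∈ range l, (b + s + i) := by
  induction l with
  | zero => simp
  | succ l ih =>
    have hstep := add_one_rpow_mul_sub_le (x := b + s + l) s (by positivity) hs
    rw [prod_range_succ, prod_range_succ]
    calc (b + s + ((l + 1 : ℕ) : ℝ)) ^ s * ((∏ i ∈ range l, (b + i)) * (b + l))
        = (b + s + l + 1) ^ s * (b + s + l - s) * ∏ i ∈ range l, (b + i) := by
          push_cast; ring_nf
      _ ≤ (b + s + l) ^ s * (b + s + l) * ∏ i ∈ range l, (b + i) := by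
          gcongr
      _ = (b + s + l) ^ s * (∏ i ∈ range l, (b + i)) * (b + s + l) := by ring
      _ ≤ (b + s) ^ s * (∏ i ∈ range l, (b + s + i)) * (b + s + l) := by gcongr
      _ = _ := by ring

lemma rpow_mul_coeff_geomPow_le {C R b s : ℝ} (hC : 0 ≤ C) (hR0 : 0 < R) (hR1 : R ≤ 1)
    (hb : 1 ≤ b) (hs : 0 ≤ s) (l : ℕ) :
    ((l : ℝ) + 1) ^ s * coeff l (geomPow C R b) ≤ coeff l (geomPow ((b + s) ^ s * C) R (b + s)) := by
  simp only [geomPow, coeff_mk]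
  have hpow : ((l : ℝ) + 1) ^ s ≤ (b + s + l) ^ s :=
    Real.rpow_le_rpow (by positivity) (by linarith) hs
  have hR : R ^ (b + s + l) ≤ R ^ (b + l) :=
    Real.rpow_le_rpow_of_exponent_ge hR0 hR1 (by linarith)
  have hprod := rpow_mul_prod_range_le (b := b) (by linarith) hs l
  calc ((l : ℝ) + 1) ^ s * (C / R ^ (b + l) * ((∏ i ∈ range l, (b + (i : ℝ))) / l.factorial))
      = ((l : ℝ) + 1) ^ s * (∏ i ∈ range l, (b + (i : ℝ))) * (C / R ^ (b + l) / l.factorial) := by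
        ring
    _ ≤ (b + s + l) ^ s * (∏ i ∈ range l, (b + (i : ℝ))) * (C / R ^ (b + l) / l.factorial) := by
        gcongr
    _ ≤ (b + s) ^ s * (∏ i ∈ range l, (b + s + (i : ℝ))) * (C / R ^ (b + s + l) / l.factorial) := by
        gcongr
    _ = _ := by ring

/-- **Lemma 3.2** (Lastra–Tahara). Let `m ∈ ℕ*`, `0 < R ≤ 1`, `σ ≥ 1`, and suppose
`f ∈ ℂ[[x]]` satisfies `B_σ^{(m)}[|f|](x) ≪ C/(R−x)^a` for some `C > 0`, `a ≥ 1`. Then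
`B_σ^{(m−1)}[∂ₓ|f|](x) ≪ aC/(R−x)^{a+1}` and
`B_σ^{(m)}[∂ₓ|f|](x) ≪ (a+σ)^σ e^σ C/(R−x)^{a+σ}`. -/
theorem borel_derivative_estimates (m : ℕ) (hm : 1 ≤ m) (R : ℝ) (hR0 : 0 < R) (hR1 : R ≤ 1)
    (σ : ℝ) (hσ : 1 ≤ σ) (f : PowerSeries ℂ) (C a : ℝ) (hC : 0 < C) (ha : 1 ≤ a)
    (h : lleR (BorR σ m (absS f)) (geomPow C R a)) :
    lleR (BorR σ (m - 1) (dXR (absS f))) (geomPow (a * C) R (a + 1)) ∧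
    lleR (BorR σ m (dXR (absS f))) (geomPow ((a + σ) ^ σ * Real.exp σ * C) R (a + σ)) := by
  obtain ⟨k, rfl⟩ : ∃ k, m = k + 1 := ⟨m - 1, by omega⟩
  rw [Nat.add_sub_cancel]
  have hderiv : lleR (BorR σ k (dXR (absS f))) (geomPow (a * C) R (a + 1)) := by
    rw [BorR_dXR, ← dXR_geomPow]
    exact dXR_mono h
  refine ⟨hderiv, fun l => ?_⟩
  have habs : 0 ≤ coeff l (dXR (absS f)) := by
    simp only [dXR, absS, coeff_mk]
    positivity
  have hconst : (a + σ) ^ (σ - 1) * (a * C) ≤ (a + σ) ^ σ * Real.exp σ * C := by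
    have hratio : a / (a + σ) ≤ Real.exp σ :=
      (div_le_one_of_le₀ (by linarith) (by positivity)).trans (Real.one_le_exp (by linarith))
    calc (a + σ) ^ (σ - 1) * (a * C) = (a + σ) ^ σ * (a / (a + σ)) * C := by
          rw [Real.rpow_sub_one (by positivity)]
          ring
      _ ≤ (a + σ) ^ σ * Real.exp σ * C := by gcongr
  calc coeff l (BorR σ (k + 1) (dXR (absS f)))
      ≤ ((l : ℝ) + 1) ^ (σ - 1) * coeff l (BorR σ k (dXR (absS f))) :=
        coeff_BorR_succ_le hσ k habs
    _ ≤ ((l : ℝ) + 1) ^ (σ - 1) * coeff l (geomPow (a * C) R (a + 1)) := by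
        gcongr
        exact hderiv l
    _ ≤ coeff l (geomPow ((a + 1 + (σ - 1)) ^ (σ - 1) * (a * C)) R (a + 1 + (σ - 1))) :=
        rpow_mul_coeff_geomPow_le (by positivity) hR0 hR1 (by linarith) (by linarith) l
    _ ≤ coeff l (geomPow ((a + σ) ^ σ * Real.exp σ * C) R (a + σ)) := by
        rw [show a + 1 + (σ - 1) = a + σ by ring]
        exact geomPow_mono_left hR0 (by positivity) hconst l
end
end

section
/- Let m ∈ ℕ*, 0 < R ≤ 1, σ ≥ 1, and suppose f(x) ∈ ℂ[[x]] satisfies B_σ^{(m)}[|f|](x) ≪ C/(R−x)^a for some C > 0 and a ≥ 1. Then for every 1 ≤ μ ≤ m and every k ≥ 1: B_σ^{(m−μ)}[∂ₓ^μ|f|](x) ≪ a(a+1)⋯(a+μ−1)·C/(R−x)^{a+μ}, and B_σ^{(m−μ)}[∂ₓ^{k+μ}|f|](x) ≪ a(a+1)⋯(a+μ−1)·A_{μ,k}·C/(R−x)^{a+μ+kσ}, where A_{μ,k} = e^{kσ} ∏_{h=1}^{k} (a+μ+hσ)^σ. -/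
open PowerSeries

noncomputable section

/-!
Lowering the index of the Borel transform by one absorbs a derivative exactly: coefficientwise,
`B_σ^{(ν+1)}[g] ≪ C/(R−x)^a` gives `B_σ^{(ν)}[∂ₓg] ≪ aC/(R−x)^{a+1}`, because
`(l+1−(ν+1))! = (l−ν)!`.
At a fixed index a derivative costs the factor `((l+1−ν)!/(l−ν)!)^{σ−1} ≤ (l+1)^{σ−1}` on the
`l`-th coefficient. Since `R ≤ 1`, it is paid for by raising the exponent of the majorant from `b`
to `b+σ`, thanks to
`(l+1)^{σ−1} b(b+1)⋯(b+l) ≤ (b+σ)^σ (b+σ)(b+σ+1)⋯(b+σ+l−1)`,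
which telescopes from the weighted AM–GM inequality `x(x+c+1)^c ≤ (x+c)^{c+1}`.
Iterating gives the second estimate even without the factor `e^{kσ} ≥ 1`.
-/

open Finset
open scoped Nat

lemma mul_add_add_one_rpow_le {x c : ℝ} (hx : 0 < x) (hc : 0 ≤ c) :
    x * (x + c + 1) ^ c ≤ (x + c) ^ (c + 1) := by
  have hc1 : 0 < c + 1 := by linarith
  have hamgm := Real.geom_mean_le_arith_mean2_weighted (w₁ := 1 / (c + 1)) (w₂ := c / (c + 1))
    (p₁ := x) (p₂ := x + c + 1) (by positivity) (by positivity) hx.le (by positivity)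
    (by field_simp; ring)
  have hmean : 1 / (c + 1) * x + c / (c + 1) * (x + c + 1) = x + c := by field_simp; ring
  calc x * (x + c + 1) ^ c = (x ^ (1 / (c + 1)) * (x + c + 1) ^ (c / (c + 1))) ^ (c + 1) := by
        rw [Real.mul_rpow (by positivity) (by positivity), ← Real.rpow_mul hx.le,
          ← Real.rpow_mul (by positivity), div_mul_cancel₀ _ hc1.ne', div_mul_cancel₀ _ hc1.ne',
          Real.rpow_one]
    _ ≤ (1 / (c + 1) * x + c / (c + 1) * (x + c + 1)) ^ (c + 1) :=
        Real.rpow_le_rpow (by positivity) hamgm hc1.le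
    _ = (x + c) ^ (c + 1) := by rw [hmean]

lemma prod_range_add_mul_rpow_le {y c : ℝ} (hy : 0 < y) (hc : 0 ≤ c) (l : ℕ) :
    (∏ i ∈ range l, (y + i)) * (y + c + l) ^ c ≤ (y + c) ^ c * ∏ i ∈ range l, (y + c + i) := by
  induction l with
  | zero => simp
  | succ l ih =>
    have hstep := mul_add_add_one_rpow_le (x := y + l) (by positivity) hc
    rw [prod_range_succ, prod_range_succ]
    calc (∏ i ∈ range l, (y + i)) * (y + l) * (y + c + ↑(l + 1)) ^ c
        = (∏ i ∈ range l, (y + i)) * ((y + l) * (y + l + c + 1) ^ c) := by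
          push_cast; ring_nf
      _ ≤ (∏ i ∈ range l, (y + i)) * (y + l + c) ^ (c + 1) := by gcongr
      _ = (∏ i ∈ range l, (y + i)) * (y + c + l) ^ c * (y + c + l) := by
          rw [Real.rpow_add_one (by positivity), add_right_comm y (l : ℝ) c]; ring
      _ ≤ (y + c) ^ c * (∏ i ∈ range l, (y + c + i)) * (y + c + l) := by gcongr
      _ = (y + c) ^ c * ((∏ i ∈ range l, (y + c + i)) * (y + c + l)) := by ring

lemma prod_range_succ_add_eq_mul (b : ℝ) (l : ℕ) :
    ∏ i ∈ range (l + 1), (b + i) = b * ∏ i ∈ range l, (b + 1 + i) := by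
  rw [prod_range_succ', mul_comm, Nat.cast_zero, add_zero]
  congr 1
  exact prod_congr rfl fun i _ => by push_cast; ring

lemma succ_rpow_mul_prod_range_succ_le {b σ : ℝ} (hb : 0 ≤ b) (hσ : 1 ≤ σ) (l : ℕ) :
    ((l : ℝ) + 1) ^ (σ - 1) * ∏ i ∈ range (l + 1), (b + i)
      ≤ (b + σ) ^ σ * ∏ i ∈ range l, (b + σ + i) := by
  have hbσ : 0 < b + σ := by linarith
  have htel := prod_range_add_mul_rpow_le (y := b + 1) (c := σ - 1) (by positivity)
    (by linarith) l
  rw [show b + 1 + (σ - 1) = b + σ by ring] at htel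
  have hlσ : ((l : ℝ) + 1) ^ (σ - 1) ≤ (b + σ + l) ^ (σ - 1) :=
    Real.rpow_le_rpow (by positivity) (by linarith) (by linarith)
  calc ((l : ℝ) + 1) ^ (σ - 1) * ∏ i ∈ range (l + 1), (b + i)
      = b * (((l : ℝ) + 1) ^ (σ - 1) * ∏ i ∈ range l, (b + 1 + i)) := by
        rw [prod_range_succ_add_eq_mul]; ring
    _ ≤ b * ((∏ i ∈ range l, (b + 1 + i)) * (b + σ + l) ^ (σ - 1)) := by
        rw [mul_comm (_ ^ _)]; gcongr
    _ ≤ (b + σ) * ((b + σ) ^ (σ - 1) * ∏ i ∈ range l, (b + σ + i)) := by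
        gcongr; linarith
    _ = (b + σ) ^ σ * ∏ i ∈ range l, (b + σ + i) := by
        rw [← mul_assoc, mul_comm (b + σ), ← Real.rpow_add_one hbσ.ne', sub_add_cancel]

lemma Nat.factorial_add_one_sub_le (n ν : ℕ) : (n + 1 - ν)! ≤ (n + 1) * (n - ν)! := by
  rcases le_or_gt ν n with h | h
  · rw [Nat.sub_add_comm h, Nat.factorial_succ]
    exact Nat.mul_le_mul_right _ (by omega)
  · rw [Nat.sub_eq_zero_of_le h, Nat.sub_eq_zero_of_le h.le]
    simp

lemma lleR.trans {f g h : PowerSeries ℝ} (hfg : lleR f g) (hgh : lleR g h) : lleR f h :=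
  fun l => (hfg l).trans (hgh l)

lemma lleR_BorR_iff {σ : ℝ} {ν : ℕ} {g G : PowerSeries ℝ} :
    lleR (BorR σ ν g) G ↔ ∀ l, coeff l g ≤ ((l - ν)! : ℝ) ^ (σ - 1) * coeff l G := by
  simp only [lleR, BorR, coeff_mk]
  exact forall_congr' fun l => div_le_iff₀' (by positivity)

lemma coeff_dXR (g : PowerSeries ℝ) (l : ℕ) :
    coeff l (dXR g) = ((l : ℝ) + 1) * coeff (l + 1) g := by
  simp [dXR]

lemma coeff_geomPow_nonneg {C R a : ℝ} (hC : 0 ≤ C) (hR : 0 ≤ R) (ha : 0 ≤ a) (j : ℕ) :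
    0 ≤ coeff j (geomPow C R a) := by
  simp only [geomPow, coeff_mk]
  positivity

lemma lleR_geomPow_of_le {C C' R a : ℝ} (hR : 0 ≤ R) (ha : 0 ≤ a) (hC : C ≤ C') :
    lleR (geomPow C R a) (geomPow C' R a) := by
  intro j
  simp only [geomPow, coeff_mk]
  gcongr

lemma coeff_geomPow_succ (C R a : ℝ) (l : ℕ) :
    ((l : ℝ) + 1) * coeff (l + 1) (geomPow C R a) = coeff l (geomPow (a * C) R (a + 1)) := by
  simp only [geomPow, coeff_mk]
  rw [prod_range_succ_add_eq_mul, Nat.factorial_succ,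
    show a + ((l + 1 : ℕ) : ℝ) = a + 1 + l by push_cast; ring]
  push_cast
  field_simp

lemma coeff_geomPow_succ_le {C R b σ : ℝ} (hC : 0 ≤ C) (hR0 : 0 < R) (hR1 : R ≤ 1)
    (hb : 0 ≤ b) (hσ : 1 ≤ σ) (l : ℕ) :
    ((l : ℝ) + 1) ^ σ * coeff (l + 1) (geomPow C R b)
      ≤ coeff l (geomPow ((b + σ) ^ σ * C) R (b + σ)) := by
  simp only [geomPow, coeff_mk]
  have hR : R ^ (b + σ + l) ≤ R ^ (b + ((l + 1 : ℕ) : ℝ)) :=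
    Real.rpow_le_rpow_of_exponent_ge hR0 hR1 (by push_cast; linarith)
  calc ((l : ℝ) + 1) ^ σ * (C / R ^ (b + ((l + 1 : ℕ) : ℝ))
          * ((∏ i ∈ range (l + 1), (b + (i : ℝ))) / ((l + 1)! : ℝ)))
      = C / R ^ (b + ((l + 1 : ℕ) : ℝ))
          * ((((l : ℝ) + 1) ^ (σ - 1) * ∏ i ∈ range (l + 1), (b + (i : ℝ))) / (l ! : ℝ)) := by
        rw [← sub_add_cancel σ 1, Real.rpow_add_one (by positivity), add_sub_cancel_right,
          Nat.factorial_succ]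
        push_cast
        field_simp
    _ ≤ C / R ^ (b + σ + l) * (((b + σ) ^ σ * ∏ i ∈ range l, (b + σ + (i : ℝ))) / (l ! : ℝ)) := by
        gcongr C / ?_ * (?_ / _)
        exact succ_rpow_mul_prod_range_succ_le hb hσ l
    _ = (b + σ) ^ σ * C / R ^ (b + σ + l)
          * ((∏ i ∈ range l, (b + σ + (i : ℝ))) / (l ! : ℝ)) := by
        ring

lemma lleR_BorR_dXR_of_succ {σ C R a : ℝ} {ν : ℕ} {g : PowerSeries ℝ}
    (h : lleR (BorR σ (ν + 1) g) (geomPow C R a)) :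
    lleR (BorR σ ν (dXR g)) (geomPow (a * C) R (a + 1)) := by
  rw [lleR_BorR_iff] at h ⊢
  intro l
  have hl := h (l + 1)
  rw [Nat.add_sub_add_right] at hl
  rw [coeff_dXR, ← coeff_geomPow_succ, mul_left_comm]
  exact mul_le_mul_of_nonneg_left hl (by positivity)

lemma lleR_BorR_iterate_dXR_of_le {σ C R a : ℝ} {m μ : ℕ} {g : PowerSeries ℝ} (hμ : μ ≤ m)
    (h : lleR (BorR σ m g) (geomPow C R a)) :
    lleR (BorR σ (m - μ) (dXR^[μ] g))
      (geomPow ((∏ i ∈ range μ, (a + (i : ℝ))) * C) R (a + μ)) := by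
  induction μ with
  | zero => simpa using h
  | succ μ ih =>
    have hstep := lleR_BorR_dXR_of_succ (ν := m - (μ + 1))
      (by rw [show m - (μ + 1) + 1 = m - μ by omega]; exact ih (by omega))
    rw [Function.iterate_succ_apply', prod_range_succ]
    convert hstep using 2 <;> push_cast <;> ring

lemma lleR_BorR_dXR {σ C R b : ℝ} {ν : ℕ} {g : PowerSeries ℝ} (hC : 0 ≤ C) (hR0 : 0 < R)
    (hR1 : R ≤ 1) (hb : 0 ≤ b) (hσ : 1 ≤ σ) (h : lleR (BorR σ ν g) (geomPow C R b)) :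
    lleR (BorR σ ν (dXR g)) (geomPow ((b + σ) ^ σ * C) R (b + σ)) := by
  rw [lleR_BorR_iff] at h ⊢
  intro l
  have hG := coeff_geomPow_nonneg hC hR0.le hb (l + 1)
  have hfact : (((l + 1 - ν)! : ℕ) : ℝ) ^ (σ - 1)
      ≤ ((l : ℝ) + 1) ^ (σ - 1) * ((l - ν)! : ℝ) ^ (σ - 1) := by
    rw [← Real.mul_rpow (by positivity) (by positivity)]
    exact Real.rpow_le_rpow (by positivity)
      (by exact_mod_cast Nat.factorial_add_one_sub_le l ν) (by linarith)
  calc coeff l (dXR g) = ((l : ℝ) + 1) * coeff (l + 1) g := coeff_dXR g l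
    _ ≤ ((l : ℝ) + 1) * ((((l + 1 - ν)! : ℕ) : ℝ) ^ (σ - 1) * coeff (l + 1) (geomPow C R b)) := by
        gcongr
        exact h (l + 1)
    _ ≤ ((l : ℝ) + 1) * (((l : ℝ) + 1) ^ (σ - 1) * ((l - ν)! : ℝ) ^ (σ - 1)
          * coeff (l + 1) (geomPow C R b)) := by
        gcongr
    _ = ((l - ν)! : ℝ) ^ (σ - 1) * (((l : ℝ) + 1) ^ σ * coeff (l + 1) (geomPow C R b)) := by
        rw [← sub_add_cancel σ 1, Real.rpow_add_one (by positivity), add_sub_cancel_right]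
        ring
    _ ≤ ((l - ν)! : ℝ) ^ (σ - 1) * coeff l (geomPow ((b + σ) ^ σ * C) R (b + σ)) := by
        gcongr
        exact coeff_geomPow_succ_le hC hR0 hR1 hb hσ l

lemma lleR_BorR_iterate_dXR {σ C R b : ℝ} {ν : ℕ} {g : PowerSeries ℝ} (hC : 0 ≤ C)
    (hR0 : 0 < R) (hR1 : R ≤ 1) (hb : 0 ≤ b) (hσ : 1 ≤ σ)
    (h : lleR (BorR σ ν g) (geomPow C R b)) (k : ℕ) :
    lleR (BorR σ ν (dXR^[k] g))
      (geomPow ((∏ h ∈ Icc 1 k, (b + h * σ) ^ σ) * C) R (b + k * σ)) := by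
  induction k with
  | zero => simpa using h
  | succ k ih =>
    have hstep := lleR_BorR_dXR (by positivity) hR0 hR1 (by positivity) hσ ih
    have hexp : b + ((k + 1 : ℕ) : ℝ) * σ = b + k * σ + σ := by push_cast; ring
    rw [Function.iterate_succ_apply', prod_Icc_succ_top (by omega), hexp, mul_comm _ (_ ^ σ),
      mul_assoc]
    exact hstep

theorem borel_iterated_derivative_estimates_general (m : ℕ)
    (R : ℝ) (hR0 : 0 < R) (hR1 : R ≤ 1)
    (σ : ℝ) (hσ : 1 ≤ σ) (f : PowerSeries ℂ) (C a : ℝ) (hC : 0 < C) (ha : 1 ≤ a)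
    (h : lleR (BorR σ m (absS f)) (geomPow C R a)) :
    ∀ μ : ℕ, 1 ≤ μ → μ ≤ m →
      (lleR (BorR σ (m - μ) (dXR^[μ] (absS f)))
          (geomPow ((∏ i ∈ Finset.range μ, (a + (i : ℝ))) * C) R (a + (μ : ℝ)))) ∧
      (∀ k : ℕ, 1 ≤ k →
        lleR (BorR σ (m - μ) (dXR^[k + μ] (absS f)))
          (geomPow ((∏ i ∈ Finset.range μ, (a + (i : ℝ))) *
              (Real.exp ((k : ℝ) * σ) *
                ∏ h ∈ Finset.Icc 1 k, (a + (μ : ℝ) + (h : ℝ) * σ) ^ σ) * C)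
            R (a + (μ : ℝ) + (k : ℝ) * σ))) := by
  intro μ _ hμm
  have hμ := lleR_BorR_iterate_dXR_of_le hμm h
  refine ⟨hμ, fun k _ => ?_⟩
  have ha0 : 0 ≤ a := by linarith
  have hk := lleR_BorR_iterate_dXR (by positivity) hR0 hR1 (by positivity) hσ hμ k
  rw [Function.iterate_add_apply]
  refine hk.trans (lleR_geomPow_of_le hR0.le (by positivity) ?_)
  rw [show ∀ P Q E : ℝ, P * (E * Q) * C = Q * (P * C) * E by intros; ring]
  exact le_mul_of_one_le_right (by positivity) (Real.one_le_exp (by positivity))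

/-- **Corollary 3.4** (Lastra–Tahara). Let `m ∈ ℕ*`, `0 < R ≤ 1`, `σ ≥ 1`, and suppose
`f ∈ ℂ[[x]]` satisfies `B_σ^{(m)}[|f|](x) ≪ C/(R−x)^a` for some `C > 0`, `a ≥ 1`. Then
for every `1 ≤ μ ≤ m` and every `k ≥ 1`:
`B_σ^{(m−μ)}[∂ₓ^μ|f|] ≪ a(a+1)⋯(a+μ−1) C/(R−x)^{a+μ}` and
`B_σ^{(m−μ)}[∂ₓ^{k+μ}|f|] ≪ a(a+1)⋯(a+μ−1) A_{μ,k} C/(R−x)^{a+μ+kσ}`,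
where `A_{μ,k} = e^{kσ} ∏_{h=1}^{k} (a+μ+hσ)^σ`. -/
theorem borel_iterated_derivative_estimates (m : ℕ) (hm : 1 ≤ m)
    (R : ℝ) (hR0 : 0 < R) (hR1 : R ≤ 1)
    (σ : ℝ) (hσ : 1 ≤ σ) (f : PowerSeries ℂ) (C a : ℝ) (hC : 0 < C) (ha : 1 ≤ a)
    (h : lleR (BorR σ m (absS f)) (geomPow C R a)) :
    ∀ μ : ℕ, 1 ≤ μ → μ ≤ m →
      (lleR (BorR σ (m - μ) (dXR^[μ] (absS f)))
          (geomPow ((∏ i ∈ Finset.range μ, (a + (i : ℝ))) * C) R (a + (μ : ℝ)))) ∧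
      (∀ k : ℕ, 1 ≤ k →
        lleR (BorR σ (m - μ) (dXR^[k + μ] (absS f)))
          (geomPow ((∏ i ∈ Finset.range μ, (a + (i : ℝ))) *
              (Real.exp ((k : ℝ) * σ) *
                ∏ h ∈ Finset.Icc 1 k, (a + (μ : ℝ) + (h : ℝ) * σ) ^ σ) * C)
            R (a + (μ : ℝ) + (k : ℝ) * σ))) :=
  borel_iterated_derivative_estimates_general m R hR0 hR1 σ hσ f C a hC ha h
end
end

section
/- Let (j,α) ∈ I_m. Then: (i) if (j,α) ∈ N₀, then k^j l^α ≤ φ(k,l) for every (k,l) ∈ ℕ*×ℕ; (ii) if (j,α) ∉ N₀, then for every integer p ≥ 1 and every real σ ≥ 1 + d_{j,α}/p one has k^j (l−p)^α / φ(k,l) ≤ (l!/(l−p)!)^{σ−1} for every (k,l) ∈ ℕ*×ℕ with l ≥ p, where d_{j,α} = min{y ∈ ℝ : (j, α−y) ∈ N₀}. -/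
open Finset

noncomputable section

/-- The Newton polygon `N₀` attached to a finite set `Λ₀` of lattice points: the convex
hull of the union of the quadrants `C(j,α) = {(x,y) : x ≤ j, y ≤ α}`, `(j,α) ∈ Λ₀`. -/
def NPa (Λ₀ : Finset (ℕ × ℕ)) : Set (ℝ × ℝ) :=
  convexHull ℝ (⋃ p ∈ Λ₀, {q : ℝ × ℝ | q.1 ≤ (p.1 : ℝ) ∧ q.2 ≤ (p.2 : ℝ)})

/-- `φ(λ,ρ) = Σ_{i=1}^p λ^{m_i} ρ^{n_i}`, the sum over the vertices `(m_i,n_i)` of the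
Newton polygon (its extreme points), evaluated at `(k,l)`. -/
def phiA (Λ₀ : Finset (ℕ × ℕ)) (k l : ℕ) : ℝ :=
  ∑ᶠ v ∈ Set.extremePoints ℝ (NPa Λ₀), (k : ℝ) ^ v.1 * (l : ℝ) ^ v.2

/-- `d_{j,α} = min {y ∈ ℝ : (j, α−y) ∈ N₀}`. -/
def dNPa (Λ₀ : Finset (ℕ × ℕ)) (p : ℕ × ℕ) : ℝ :=
  sInf {y : ℝ | (((p.1 : ℝ), (p.2 : ℝ) - y) : ℝ × ℝ) ∈ NPa Λ₀}

/-!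
`N₀` is the lower closure, for the componentwise order, of the polygon `conv Λ₀`; hence it is
closed and its vertices are points of `Λ₀`. For `k, l ≥ 1` the monomial `k ^ x * l ^ y` is the
exponential of the linear form `x log k + y log l`, whose coefficients are nonnegative, and such a
form attains its maximum over `N₀` at a vertex; so `k ^ x * l ^ y ≤ φ(k, l)` on `N₀`. At `l = 0`
the vertex `(m, 0)` still contributes `k ^ m ≥ k ^ j`. For (ii), `(j, α - d)` lies in `N₀`, which
gives `k ^ j (l - p) ^ α ≤ (l - p) ^ d φ(k, l)`, and
`(l - p) ^ d = ((l - p) ^ p) ^ (d / p) ≤ (l! / (l - p)!) ^ (σ - 1)`.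
-/

open Set

section LowerClosure

variable {E : Type*} [AddCommGroup E] [PartialOrder E] [IsOrderedAddMonoid E] [Module ℝ E]

theorem convexHull_lowerClosure [PosSMulMono ℝ E] (s : Set E) :
    convexHull ℝ (lowerClosure s : Set E) = lowerClosure (convexHull ℝ s) := by
  apply (convexHull_min (lowerClosure_mono (subset_convexHull ℝ s)) _).antisymm
  · rintro q ⟨c, hc, hqc⟩
    suffices hc' :
        convexHull ℝ s ⊆ {c | ∀ q ≤ c, q ∈ convexHull ℝ (lowerClosure s : Set E)} from
      hc' hc q hqc
    refine convexHull_min (fun c hc q hqc => subset_convexHull ℝ _ ⟨c, hc, hqc⟩) ?_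
    intro c hc c' hc' a b ha hb hab q hq
    obtain ⟨d, hd, rfl⟩ : ∃ d, 0 ≤ d ∧ q = a • c + b • c' - d :=
      ⟨_, sub_nonneg.2 hq, (sub_sub_cancel _ _).symm⟩
    rw [show a • c + b • c' - d = a • (c - d) + b • (c' - d) by
      rw [smul_sub, smul_sub, sub_add_sub_comm, ← add_smul, hab, one_smul]]
    exact convex_convexHull ℝ _ (hc _ (sub_le_self c hd)) (hc' _ (sub_le_self c' hd)) ha hb hab
  · rintro q ⟨c, hc, hqc⟩ q' ⟨c', hc', hqc'⟩ a b ha hb hab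
    exact ⟨a • c + b • c', convex_convexHull ℝ s hc hc' ha hb hab,
      add_le_add (smul_le_smul_of_nonneg_left hqc ha) (smul_le_smul_of_nonneg_left hqc' hb)⟩

theorem extremePoints_lowerClosure_subset (s : Set E) :
    (lowerClosure s : Set E).extremePoints ℝ ⊆ s := by
  rintro v ⟨⟨c, hc, hvc⟩, hext⟩
  have hreflect : v - (c - v) ∈ (lowerClosure s : Set E) :=
    ⟨c, hc, (sub_le_self v (sub_nonneg.2 hvc)).trans hvc⟩
  have hmid : v ∈ openSegment ℝ c (v - (c - v)) := by
    refine ⟨1 / 2, 1 / 2, by norm_num, by norm_num, by norm_num, ?_⟩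
    rw [← smul_add]; module
  rwa [← hext ⟨c, hc, le_rfl⟩ hreflect hmid]

end LowerClosure

section ClosedLowerClosure

variable {E : Type*} [AddCommGroup E] [PartialOrder E] [IsOrderedAddMonoid E] [TopologicalSpace E]
  [IsTopologicalAddGroup E] [ClosedIicTopology E]

open scoped Pointwise in
theorem IsCompact.isClosed_lowerClosure {K : Set E} (hK : IsCompact K) :
    IsClosed (lowerClosure K : Set E) := by
  rw [← add_zero K, ← add_lowerClosure, ← Set.singleton_zero, lowerClosure_singleton,
    LowerSet.coe_Iic]
  exact isClosed_Iic.add_left_of_isCompact hK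

end ClosedLowerClosure

section CompactlyDominated

variable {E : Type*} [TopologicalSpace E] [Preorder E]

def IsCompactlyDominated (A : Set E) : Prop :=
  ∃ K ⊆ A, IsCompact K ∧ K.Nonempty ∧ A ⊆ lowerClosure K

theorem IsCompactlyDominated.nonempty {A : Set E} (hA : IsCompactlyDominated A) : A.Nonempty :=
  let ⟨_, hKA, _, hK, _⟩ := hA
  hK.mono hKA

theorem IsCompactlyDominated.toExposed [AddCommMonoid E] [Module ℝ E] {A : Set E}
    (hA : IsCompactlyDominated A) {l : StrongDual ℝ E} (hl : Monotone l) :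
    IsCompactlyDominated (l.toExposed A) := by
  obtain ⟨K, hKA, hK, hKne, hAK⟩ := hA
  obtain ⟨w, hwK, hw⟩ := hK.exists_isMaxOn hKne l.continuous.continuousOn
  have hwA : ∀ y ∈ A, l y ≤ l w := fun y hy =>
    let ⟨c, hcK, hyc⟩ := hAK hy
    (hl hyc).trans (hw hcK)
  refine ⟨K ∩ l ⁻¹' {l w}, fun x ⟨hxK, hx⟩ => ⟨hKA hxK, fun y hy => hx ▸ hwA y hy⟩,
    hK.inter_right (isClosed_singleton.preimage l.continuous), ⟨w, hwK, rfl⟩, ?_⟩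
  rintro x ⟨hxA, hx⟩
  obtain ⟨c, hcK, hxc⟩ := hAK hxA
  have hlx : l x = l w := le_antisymm (hwA x hxA) (hx w (hKA hwK))
  exact ⟨c, ⟨hcK, le_antisymm (hwA c (hKA hcK)) (hlx ▸ hl hxc)⟩, hxc⟩

end CompactlyDominated

theorem IsCompactlyDominated.exists_mem_extremePoints_forall_le {A : Set (ℝ × ℝ)}
    (hA : IsCompactlyDominated A) {l : StrongDual ℝ (ℝ × ℝ)} (hl : Monotone l) :
    ∃ w ∈ A.extremePoints ℝ, ∀ y ∈ A, l y ≤ l w := by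
  -- break ties of `l` by maximizing `x + y`, then `x`: the last face is a single point
  set sum : StrongDual ℝ (ℝ × ℝ) := .fst ℝ ℝ ℝ + .snd ℝ ℝ ℝ
  set F₁ := l.toExposed A
  set F₂ := sum.toExposed F₁
  set F₃ := (ContinuousLinearMap.fst ℝ ℝ ℝ).toExposed F₂
  have hsum : Monotone sum := fun _ _ h => add_le_add h.1 h.2
  have hfst : Monotone (ContinuousLinearMap.fst ℝ ℝ ℝ) := fun _ _ h => h.1
  obtain ⟨w, hw⟩ := (((hA.toExposed hl).toExposed hsum).toExposed hfst).nonempty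
  have hF₃ : F₃ = {w} := by
    refine eq_singleton_iff_unique_mem.2 ⟨hw, fun x hx => ?_⟩
    have h₁ : x.1 = w.1 := le_antisymm (hw.2 x hx.1) (hx.2 w hw.1)
    have h₂ : x.1 + x.2 = w.1 + w.2 := le_antisymm (hw.1.2 x hx.1.1) (hx.1.2 w hw.1.1)
    exact Prod.ext h₁ (by simpa [h₁] using h₂)
  have hext : IsExtreme ℝ A F₃ :=
    (ContinuousLinearMap.toExposed.isExposed.isExtreme.trans
      ContinuousLinearMap.toExposed.isExposed.isExtreme).trans
      ContinuousLinearMap.toExposed.isExposed.isExtreme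
  exact ⟨w, isExtreme_singleton.1 (hF₃ ▸ hext), hw.1.1.2⟩

def realPoints (Λ₀ : Finset (ℕ × ℕ)) : Set (ℝ × ℝ) :=
  Prod.map (Nat.cast : ℕ → ℝ) Nat.cast '' (Λ₀ : Set (ℕ × ℕ))

theorem finite_realPoints (Λ₀ : Finset (ℕ × ℕ)) : (realPoints Λ₀).Finite :=
  Λ₀.finite_toSet.image _

namespace NPa

variable {Λ₀ : Finset (ℕ × ℕ)}

theorem natCast_mem {p : ℕ × ℕ} (hp : p ∈ Λ₀) : (((p.1 : ℝ), (p.2 : ℝ)) : ℝ × ℝ) ∈ NPa Λ₀ :=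
  subset_convexHull ℝ _ (mem_biUnion hp ⟨le_rfl, le_rfl⟩)

theorem eq_lowerClosure (Λ₀ : Finset (ℕ × ℕ)) :
    NPa Λ₀ = lowerClosure (convexHull ℝ (realPoints Λ₀)) := by
  rw [NPa, ← convexHull_lowerClosure]
  congr 1
  ext q
  simp only [realPoints, mem_iUnion₂, SetLike.mem_coe, mem_lowerClosure, Set.exists_mem_image,
    exists_prop, Prod.le_def, Prod.map_fst, Prod.map_snd]
  rfl

theorem isLowerSet (Λ₀ : Finset (ℕ × ℕ)) : IsLowerSet (NPa Λ₀) :=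
  eq_lowerClosure Λ₀ ▸ (lowerClosure _).lower

theorem isCompact_convexHull_realPoints (Λ₀ : Finset (ℕ × ℕ)) :
    IsCompact (convexHull ℝ (realPoints Λ₀)) :=
  (finite_realPoints Λ₀).isCompact_convexHull (𝕜 := ℝ)

theorem isClosed (Λ₀ : Finset (ℕ × ℕ)) : IsClosed (NPa Λ₀) := by
  rw [eq_lowerClosure]
  exact (isCompact_convexHull_realPoints Λ₀).isClosed_lowerClosure

theorem isCompactlyDominated (hne : Λ₀.Nonempty) : IsCompactlyDominated (NPa Λ₀) := by
  rw [eq_lowerClosure]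
  exact ⟨_, subset_lowerClosure, isCompact_convexHull_realPoints Λ₀,
    ((Finset.coe_nonempty.2 hne).image _).convexHull, subset_rfl⟩

theorem bddAbove_image_snd (Λ₀ : Finset (ℕ × ℕ)) : BddAbove (Prod.snd '' NPa Λ₀) := by
  obtain ⟨B, hB⟩ :=
    (isCompact_convexHull_realPoints Λ₀).bddAbove_image continuous_snd.continuousOn
  refine ⟨B, ?_⟩
  rintro _ ⟨q, hq, rfl⟩
  rw [eq_lowerClosure] at hq
  obtain ⟨c, hc, hqc⟩ := hq
  exact hqc.2.trans (hB ⟨c, hc, rfl⟩)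

theorem extremePoints_subset_realPoints (Λ₀ : Finset (ℕ × ℕ)) :
    (NPa Λ₀).extremePoints ℝ ⊆ realPoints Λ₀ := by
  intro v hv
  have hvP : v ∈ convexHull ℝ (realPoints Λ₀) :=
    extremePoints_lowerClosure_subset _ (eq_lowerClosure Λ₀ ▸ hv)
  refine extremePoints_convexHull_subset
    (inter_extremePoints_subset_extremePoints_of_subset ?_ ⟨hvP, hv⟩)
  rw [eq_lowerClosure]
  exact subset_lowerClosure

theorem finite_extremePoints (Λ₀ : Finset (ℕ × ℕ)) : ((NPa Λ₀).extremePoints ℝ).Finite :=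
  (finite_realPoints Λ₀).subset (extremePoints_subset_realPoints Λ₀)

theorem nonneg_of_mem_extremePoints {v : ℝ × ℝ} (hv : v ∈ (NPa Λ₀).extremePoints ℝ) :
    0 ≤ v := by
  obtain ⟨p, -, rfl⟩ := extremePoints_subset_realPoints Λ₀ hv
  exact ⟨Nat.cast_nonneg _, Nat.cast_nonneg _⟩

theorem mk_zero_mem_extremePoints {m : ℕ} (hmem : (m, 0) ∈ Λ₀)
    (hsub : Λ₀ ⊆ insert (m, 0) (ImF m)) :
    (((m : ℝ), (0 : ℝ)) : ℝ × ℝ) ∈ (NPa Λ₀).extremePoints ℝ := by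
  obtain ⟨w, hw, hmax⟩ := (isCompactlyDominated ⟨_, hmem⟩).exists_mem_extremePoints_forall_le
    (l := .fst ℝ ℝ ℝ) fun _ _ h => h.1
  obtain ⟨p, hp, rfl⟩ := extremePoints_subset_realPoints Λ₀ hw
  have hmp : (m : ℝ) ≤ p.1 := hmax _ (natCast_mem hmem)
  obtain rfl | hp := Finset.mem_insert.1 (hsub hp)
  · simpa using hw
  · exact absurd (Nat.cast_le.1 hmp) (Finset.mem_filter.1 hp).2.2.not_ge

end NPa

namespace phiA

variable {Λ₀ : Finset (ℕ × ℕ)}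

theorem eq_sum (Λ₀ : Finset (ℕ × ℕ)) (k l : ℕ) :
    phiA Λ₀ k l = ∑ v ∈ (NPa.finite_extremePoints Λ₀).toFinset, (k : ℝ) ^ v.1 * (l : ℝ) ^ v.2 :=
  finsum_mem_eq_finite_toFinset_sum _ _

theorem nonneg (Λ₀ : Finset (ℕ × ℕ)) (k l : ℕ) : 0 ≤ phiA Λ₀ k l := by
  rw [eq_sum]
  exact Finset.sum_nonneg fun _ _ => by positivity

theorem rpow_mul_rpow_le_of_mem_extremePoints {v : ℝ × ℝ} (hv : v ∈ (NPa Λ₀).extremePoints ℝ)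
    (k l : ℕ) :
    (k : ℝ) ^ v.1 * (l : ℝ) ^ v.2 ≤ phiA Λ₀ k l := by
  rw [eq_sum]
  exact Finset.single_le_sum (f := fun v : ℝ × ℝ => (k : ℝ) ^ v.1 * (l : ℝ) ^ v.2)
    (fun _ _ => by positivity) ((NPa.finite_extremePoints Λ₀).mem_toFinset.2 hv)

theorem mono_right (k : ℕ) {l l' : ℕ} (hll' : l ≤ l') : phiA Λ₀ k l ≤ phiA Λ₀ k l' := by
  rw [eq_sum, eq_sum]
  refine Finset.sum_le_sum fun v hv => mul_le_mul_of_nonneg_left ?_ (by positivity)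
  exact Real.rpow_le_rpow (Nat.cast_nonneg _) (Nat.cast_le.2 hll')
    (NPa.nonneg_of_mem_extremePoints ((NPa.finite_extremePoints Λ₀).mem_toFinset.1 hv)).2

theorem rpow_mul_rpow_le_of_mem (hne : Λ₀.Nonempty) {x y : ℝ} (hxy : (x, y) ∈ NPa Λ₀) {k l : ℕ}
    (hk : 1 ≤ k) (hl : 1 ≤ l) : (k : ℝ) ^ x * (l : ℝ) ^ y ≤ phiA Λ₀ k l := by
  have hk₀ : (0 : ℝ) < k := Nat.cast_pos.2 hk
  have hl₀ : (0 : ℝ) < l := Nat.cast_pos.2 hl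
  set f : StrongDual ℝ (ℝ × ℝ) := Real.log k • .fst ℝ ℝ ℝ + Real.log l • .snd ℝ ℝ ℝ
  have hf : Monotone f := fun a b h => add_le_add
    (mul_le_mul_of_nonneg_left h.1 (Real.log_nonneg (Nat.one_le_cast.2 hk)))
    (mul_le_mul_of_nonneg_left h.2 (Real.log_nonneg (Nat.one_le_cast.2 hl)))
  have hmonomial (v : ℝ × ℝ) : (k : ℝ) ^ v.1 * (l : ℝ) ^ v.2 = Real.exp (f v) := by
    simp [f, Real.rpow_def_of_pos hk₀, Real.rpow_def_of_pos hl₀, ← Real.exp_add, mul_comm]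
  obtain ⟨w, hw, hmax⟩ := (NPa.isCompactlyDominated hne).exists_mem_extremePoints_forall_le hf
  calc (k : ℝ) ^ x * (l : ℝ) ^ y = Real.exp (f (x, y)) := hmonomial (x, y)
    _ ≤ Real.exp (f w) := Real.exp_le_exp.2 (hmax _ hxy)
    _ = (k : ℝ) ^ w.1 * (l : ℝ) ^ w.2 := (hmonomial w).symm
    _ ≤ phiA Λ₀ k l := rpow_mul_rpow_le_of_mem_extremePoints hw k l

end phiA

section dNPa

variable {Λ₀ : Finset (ℕ × ℕ)} {m j α : ℕ}

theorem dNPa_mem (hmem : (m, 0) ∈ Λ₀) (hjm : j ≤ m) :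
    (((j : ℝ), (α : ℝ) - dNPa Λ₀ (j, α)) : ℝ × ℝ) ∈ NPa Λ₀ := by
  have hclosed : IsClosed {y : ℝ | (((j : ℝ), (α : ℝ) - y) : ℝ × ℝ) ∈ NPa Λ₀} :=
    (NPa.isClosed Λ₀).preimage (by fun_prop)
  have hαmem : (((j : ℝ), (α : ℝ) - α) : ℝ × ℝ) ∈ NPa Λ₀ :=
    NPa.isLowerSet Λ₀ ⟨Nat.cast_le.2 hjm, by simp⟩ (NPa.natCast_mem hmem)
  obtain ⟨B, hB⟩ := NPa.bddAbove_image_snd Λ₀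
  have hbdd : BddBelow {y : ℝ | (((j : ℝ), (α : ℝ) - y) : ℝ × ℝ) ∈ NPa Λ₀} :=
    ⟨α - B, fun y hy => by linarith [hB ⟨_, hy, rfl⟩]⟩
  exact hclosed.csInf_mem ⟨_, hαmem⟩ hbdd

theorem dNPa_pos (hmem : (m, 0) ∈ Λ₀) (hjm : j ≤ m)
    (hN : (((j : ℝ), (α : ℝ)) : ℝ × ℝ) ∉ NPa Λ₀) : 0 < dNPa Λ₀ (j, α) := by
  by_contra! hd
  have hle : (((j : ℝ), (α : ℝ)) : ℝ × ℝ) ≤ ((j : ℝ), (α : ℝ) - dNPa Λ₀ (j, α)) :=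
    ⟨le_rfl, by simpa using hd⟩
  exact hN (NPa.isLowerSet Λ₀ hle (dNPa_mem hmem hjm))

end dNPa

theorem natCast_sub_rpow_le_factorial_div_rpow {l p : ℕ} (hp : 0 < p) (hpl : p ≤ l) {d s : ℝ}
    (hd : 0 ≤ d) (hs : d / p ≤ s) :
    ((l - p : ℕ) : ℝ) ^ d ≤ ((l.factorial : ℝ) / (l - p).factorial) ^ s := by
  set q := l - p
  have hq : (0 : ℝ) < q.factorial := by positivity
  have hqp : (q : ℝ) ^ p ≤ l.factorial / q.factorial := by
    rw [le_div_iff₀ hq, mul_comm]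
    have h := Nat.factorial_mul_pow_le_factorial (m := q) (n := p)
    rw [Nat.sub_add_cancel hpl] at h
    exact_mod_cast (Nat.mul_le_mul_left _ (Nat.pow_le_pow_left q.le_succ p)).trans h
  have hA : (1 : ℝ) ≤ l.factorial / q.factorial := by
    rw [le_div_iff₀ hq, one_mul]
    exact_mod_cast Nat.factorial_le (Nat.sub_le l p)
  calc (q : ℝ) ^ d = ((q : ℝ) ^ (p : ℝ)) ^ (d / p) := by
        rw [← Real.rpow_mul (Nat.cast_nonneg _), mul_div_cancel₀ _ (by positivity)]
    _ ≤ ((l.factorial : ℝ) / q.factorial) ^ (d / p) :=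
        Real.rpow_le_rpow (by positivity) (by rwa [Real.rpow_natCast]) (by positivity)
    _ ≤ ((l.factorial : ℝ) / q.factorial) ^ s := Real.rpow_le_rpow_of_exponent_le hA hs

section estimates

variable {Λ₀ : Finset (ℕ × ℕ)} {m j α : ℕ}

theorem pow_mul_pow_le_phiA_of_mem (hmem : (m, 0) ∈ Λ₀) (hsub : Λ₀ ⊆ insert (m, 0) (ImF m))
    (hjm : j ≤ m) (hN : (((j : ℝ), (α : ℝ)) : ℝ × ℝ) ∈ NPa Λ₀) {k : ℕ} (hk : 1 ≤ k) (l : ℕ) :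
    (k : ℝ) ^ j * (l : ℝ) ^ α ≤ phiA Λ₀ k l := by
  rcases Nat.eq_zero_or_pos l with rfl | hl
  · calc (k : ℝ) ^ j * ((0 : ℕ) : ℝ) ^ α ≤ (k : ℝ) ^ m * 1 :=
          mul_le_mul (pow_le_pow_right₀ (Nat.one_le_cast.2 hk) hjm)
            (pow_le_one₀ (by simp) (by simp)) (by positivity) (by positivity)
      _ = (k : ℝ) ^ (m : ℝ) * ((0 : ℕ) : ℝ) ^ (0 : ℝ) := by simp
      _ ≤ phiA Λ₀ k 0 := phiA.rpow_mul_rpow_le_of_mem_extremePoints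
          (NPa.mk_zero_mem_extremePoints hmem hsub) k 0
  · simpa using phiA.rpow_mul_rpow_le_of_mem ⟨_, hmem⟩ hN hk hl

theorem pow_mul_pow_div_phiA_le_of_notMem (hmem : (m, 0) ∈ Λ₀) (hjm : j ≤ m)
    (hN : (((j : ℝ), (α : ℝ)) : ℝ × ℝ) ∉ NPa Λ₀) {p : ℕ} (hp : 1 ≤ p) {σ : ℝ}
    (hσ : 1 + dNPa Λ₀ (j, α) / p ≤ σ) {k l : ℕ} (hk : 1 ≤ k) (hpl : p ≤ l) :
    (k : ℝ) ^ j * ((l - p : ℕ) : ℝ) ^ α / phiA Λ₀ k l ≤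
      ((l.factorial : ℝ) / (l - p).factorial) ^ (σ - 1) := by
  set d := dNPa Λ₀ (j, α)
  have hd : 0 < d := dNPa_pos hmem hjm hN
  refine div_le_of_le_mul₀ (phiA.nonneg Λ₀ k l) (by positivity) ?_
  rcases Nat.eq_zero_or_pos (l - p) with hq | hq
  · have hα : α ≠ 0 := by
      rintro rfl
      have hle : (((j : ℝ), ((0 : ℕ) : ℝ)) : ℝ × ℝ) ≤ ((m : ℝ), ((0 : ℕ) : ℝ)) :=
        ⟨Nat.cast_le.2 hjm, le_rfl⟩
      exact hN (NPa.isLowerSet Λ₀ hle (NPa.natCast_mem hmem))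
    rw [hq, Nat.cast_zero, zero_pow hα, mul_zero]
    exact mul_nonneg (by positivity) (phiA.nonneg Λ₀ k l)
  have hq₀ : (0 : ℝ) < (l - p : ℕ) := Nat.cast_pos.2 hq
  calc (k : ℝ) ^ j * ((l - p : ℕ) : ℝ) ^ α
      = ((l - p : ℕ) : ℝ) ^ d * ((k : ℝ) ^ (j : ℝ) * ((l - p : ℕ) : ℝ) ^ ((α : ℝ) - d)) := by
        rw [Real.rpow_sub hq₀, Real.rpow_natCast, Real.rpow_natCast]
        field_simp
    _ ≤ ((l.factorial : ℝ) / (l - p).factorial) ^ (σ - 1) * phiA Λ₀ k l :=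
        mul_le_mul (natCast_sub_rpow_le_factorial_div_rpow hp hpl hd.le (by linarith))
          ((phiA.rpow_mul_rpow_le_of_mem ⟨_, hmem⟩ (dNPa_mem hmem hjm) hk hq).trans
            (phiA.mono_right k (Nat.sub_le l p)))
          (by positivity) (by positivity)

end estimates

theorem newton_polygon_phi_estimates_general (m : ℕ)
    (Λ₀ : Finset (ℕ × ℕ)) (hmem : (m, 0) ∈ Λ₀) (hsub : Λ₀ ⊆ insert (m, 0) (ImF m))
    (j α : ℕ) (hjα : (j, α) ∈ ImF m) :
    ((((j : ℝ), (α : ℝ)) : ℝ × ℝ) ∈ NPa Λ₀ →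
      ∀ k l : ℕ, 1 ≤ k → (k : ℝ) ^ j * (l : ℝ) ^ α ≤ phiA Λ₀ k l) ∧
    ((((j : ℝ), (α : ℝ)) : ℝ × ℝ) ∉ NPa Λ₀ →
      ∀ p : ℕ, 1 ≤ p → ∀ σ : ℝ, 1 + dNPa Λ₀ (j, α) / (p : ℝ) ≤ σ →
        ∀ k l : ℕ, 1 ≤ k → p ≤ l →
          (k : ℝ) ^ j * ((l - p : ℕ) : ℝ) ^ α / phiA Λ₀ k l ≤
            ((l.factorial : ℝ) / ((l - p).factorial : ℝ)) ^ (σ - 1)) := by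
  have hjm : j ≤ m := (Finset.mem_filter.1 hjα).2.2.le
  exact ⟨fun hN k l hk => pow_mul_pow_le_phiA_of_mem hmem hsub hjm hN hk l,
    fun hN _ hp _ hσ _ _ hk hpl => pow_mul_pow_div_phiA_le_of_notMem hmem hjm hN hp hσ hk hpl⟩

/-- **Proposition 3.5** (Lastra–Tahara). Let `(j,α) ∈ I_m`. Then
(i) if `(j,α) ∈ N₀`, `k^j l^α ≤ φ(k,l)` for every `(k,l) ∈ ℕ* × ℕ`;
(ii) if `(j,α) ∉ N₀`, then for every `p ≥ 1` and `σ ≥ 1 + d_{j,α}/p`,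
`k^j (l−p)^α / φ(k,l) ≤ (l!/(l−p)!)^{σ−1}` for every `(k,l) ∈ ℕ* × ℕ` with `l ≥ p`. -/
theorem newton_polygon_phi_estimates (m : ℕ) (hm : 1 ≤ m)
    (Λ₀ : Finset (ℕ × ℕ)) (hmem : (m, 0) ∈ Λ₀) (hsub : Λ₀ ⊆ insert (m, 0) (ImF m))
    (j α : ℕ) (hjα : (j, α) ∈ ImF m) :
    ((((j : ℝ), (α : ℝ)) : ℝ × ℝ) ∈ NPa Λ₀ →
      ∀ k l : ℕ, 1 ≤ k → (k : ℝ) ^ j * (l : ℝ) ^ α ≤ phiA Λ₀ k l) ∧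
    ((((j : ℝ), (α : ℝ)) : ℝ × ℝ) ∉ NPa Λ₀ →
      ∀ p : ℕ, 1 ≤ p → ∀ σ : ℝ, 1 + dNPa Λ₀ (j, α) / (p : ℝ) ≤ σ →
        ∀ k l : ℕ, 1 ≤ k → p ≤ l →
          (k : ℝ) ^ j * ((l - p : ℕ) : ℝ) ^ α / phiA Λ₀ k l ≤
            ((l.factorial : ℝ) / ((l - p).factorial : ℝ)) ^ (σ - 1)) :=
  newton_polygon_phi_estimates_general m Λ₀ hmem hsub j α hjα
end
end

section
/- Let m, n, p ∈ ℕ with m ≥ 1, n ≥ 0 and p ≥ 1, let j ∈ ℕ with 0 ≤ j < m, and let α ∈ ℕ with α > n(m−j)/m; set d = α − n(m−j)/m > 0. Then for every real σ ≥ (p+d)/p one has k^j (l−p)^α ≤ (k^m + l^n) · (l!/(l−p)!)^{σ−1} for every (k,l) ∈ ℕ*×ℕ with l ≥ p. -/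
/-!
Write `t = n(m-j)/m`, so that `α = t + d`. Weighted AM–GM with weights `j/m` and `(m-j)/m`
bounds `k^j (l-p)^t ≤ (k^m)^{j/m} (l^n)^{(m-j)/m}` by `k^m + l^n`. The remaining factor
`(l-p)^d = ((l-p)^p)^{d/p}` is at most `(l!/(l-p)!)^{d/p}`, because `l!/(l-p)!` is a product of
`p` factors each at least `l-p`, and `d/p ≤ σ - 1`.
-/

open Real

theorem Real.rpow_mul_rpow_one_sub_le_add {x y θ : ℝ} (hx : 0 ≤ x) (hy : 0 ≤ y)
    (hθ₀ : 0 ≤ θ) (hθ₁ : θ ≤ 1) : x ^ θ * y ^ (1 - θ) ≤ x + y :=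
  calc x ^ θ * y ^ (1 - θ) ≤ θ * x + (1 - θ) * y :=
        geom_mean_le_arith_mean2_weighted hθ₀ (by linarith) hx hy (by ring)
    _ ≤ x + y := by nlinarith

theorem Real.pow_mul_rpow_le_pow_add_pow {x y : ℝ} (hx : 0 ≤ x) (hy : 0 ≤ y) {j m : ℕ}
    (hj : j < m) (n : ℕ) : x ^ j * y ^ ((n : ℝ) * (m - j) / m) ≤ x ^ m + y ^ n := by
  have hm : (0 : ℝ) < m := by exact_mod_cast (Nat.zero_le j).trans_lt hj
  have hjm : (j : ℝ) / m ≤ 1 := (div_le_one hm).2 (by exact_mod_cast hj.le)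
  have hxj : x ^ j = (x ^ m) ^ ((j : ℝ) / m) := by
    rw [← rpow_natCast x m, ← rpow_mul hx, mul_div_cancel₀ _ hm.ne', rpow_natCast]
  have hyt : y ^ ((n : ℝ) * (m - j) / m) = (y ^ n) ^ (1 - (j : ℝ) / m) := by
    rw [← rpow_natCast y n, ← rpow_mul hy]
    congr 1
    field_simp
  rw [hxj, hyt]
  exact rpow_mul_rpow_one_sub_le_add (by positivity) (by positivity) (by positivity) hjm

theorem Nat.sub_pow_le_descFactorial (l p : ℕ) : (l - p) ^ p ≤ l.descFactorial p :=
  (Nat.pow_le_pow_left (by omega) p).trans (Nat.pow_sub_le_descFactorial l p)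

theorem Nat.cast_factorial_div_factorial_sub {l p : ℕ} (h : p ≤ l) :
    (l.factorial : ℝ) / (l - p).factorial = l.descFactorial p := by
  rw [div_eq_iff (by positivity), ← Nat.factorial_mul_descFactorial h]
  push_cast
  ring

theorem Real.rpow_le_rpow_of_pow_le {a F d s : ℝ} {p : ℕ} (ha : 0 ≤ a) (hF : 1 ≤ F)
    (hp : 0 < p) (haF : a ^ p ≤ F) (hd : 0 ≤ d) (hds : d / p ≤ s) : a ^ d ≤ F ^ s :=
  calc a ^ d = (a ^ p) ^ (d / p) := by
        rw [← rpow_natCast a p, ← rpow_mul ha, mul_div_cancel₀ _ (by positivity)]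
    _ ≤ F ^ (d / p) := rpow_le_rpow (by positivity) haF (by positivity)
    _ ≤ F ^ s := rpow_le_rpow_of_exponent_le hF hds

theorem young_newton_estimate_general (m n p j α : ℕ) (hp : 1 ≤ p) (hj : j < m)
    (hα : (n : ℝ) * ((m : ℝ) - (j : ℝ)) / (m : ℝ) < (α : ℝ))
    (d σ : ℝ) (hd : d = (α : ℝ) - (n : ℝ) * ((m : ℝ) - (j : ℝ)) / (m : ℝ))
    (hσ : ((p : ℝ) + d) / (p : ℝ) ≤ σ) :
    ∀ k l : ℕ, 1 ≤ k → p ≤ l →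
      (k : ℝ) ^ j * ((l - p : ℕ) : ℝ) ^ α ≤
        ((k : ℝ) ^ m + (l : ℝ) ^ n) *
          ((l.factorial : ℝ) / ((l - p).factorial : ℝ)) ^ (σ - 1) := by
  intro k l _ hl
  set t : ℝ := (n : ℝ) * (m - j) / m
  have ht : 0 ≤ t :=
    div_nonneg (mul_nonneg n.cast_nonneg (sub_nonneg.2 (by exact_mod_cast hj.le))) m.cast_nonneg
  have hp₀ : (0 : ℝ) < p := by exact_mod_cast hp
  have hd₀ : 0 < d := by linarith
  have hdσ : d / p ≤ σ - 1 := by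
    rwa [add_div, div_self hp₀.ne', ← le_sub_iff_add_le'] at hσ
  have hal : ((l - p : ℕ) : ℝ) ≤ l := by exact_mod_cast l.sub_le p
  have haF : ((l - p : ℕ) : ℝ) ^ p ≤ l.descFactorial p := by
    exact_mod_cast Nat.sub_pow_le_descFactorial l p
  set a : ℝ := ((l - p : ℕ) : ℝ)
  have hsplit : a ^ α = a ^ t * a ^ d := by
    rw [← rpow_natCast, ← rpow_add' (Nat.cast_nonneg _) (by linarith), hd, add_sub_cancel]
  have hyoung : (k : ℝ) ^ j * a ^ t ≤ (k : ℝ) ^ m + (l : ℝ) ^ n :=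
    calc (k : ℝ) ^ j * a ^ t ≤ (k : ℝ) ^ j * (l : ℝ) ^ t := by gcongr
      _ ≤ (k : ℝ) ^ m + (l : ℝ) ^ n :=
          pow_mul_rpow_le_pow_add_pow k.cast_nonneg l.cast_nonneg hj n
  have hdesc : a ^ d ≤ (l.descFactorial p : ℝ) ^ (σ - 1) :=
    rpow_le_rpow_of_pow_le (Nat.cast_nonneg _)
      (by exact_mod_cast Nat.descFactorial_pos.2 hl) hp
      haF hd₀.le hdσ
  rw [Nat.cast_factorial_div_factorial_sub hl, hsplit, ← mul_assoc]
  exact mul_le_mul hyoung hdesc (by positivity) (by positivity)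

/-- **Lemma 3.6** (Lastra–Tahara). Let `m,n,p ∈ ℕ` with `m ≥ 1`, `p ≥ 1`, let `0 ≤ j < m`
and `α > n(m−j)/m`, and set `d = α − n(m−j)/m`. If `σ ≥ (p+d)/p`, then
`k^j (l−p)^α ≤ (k^m + l^n) (l!/(l−p)!)^{σ−1}` for all `(k,l) ∈ ℕ* × ℕ` with `l ≥ p`. -/
theorem young_newton_estimate (m n p j α : ℕ) (hm : 1 ≤ m) (hp : 1 ≤ p) (hj : j < m)
    (hα : (n : ℝ) * ((m : ℝ) - (j : ℝ)) / (m : ℝ) < (α : ℝ))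
    (d σ : ℝ) (hd : d = (α : ℝ) - (n : ℝ) * ((m : ℝ) - (j : ℝ)) / (m : ℝ))
    (hσ : ((p : ℝ) + d) / (p : ℝ) ≤ σ) :
    ∀ k l : ℕ, 1 ≤ k → p ≤ l →
      (k : ℝ) ^ j * ((l - p : ℕ) : ℝ) ^ α ≤
        ((k : ℝ) ^ m + (l : ℝ) ^ n) *
          ((l.factorial : ℝ) / ((l - p).factorial : ℝ)) ^ (σ - 1) :=
  young_newton_estimate_general m n p j α hp hj hα d σ hd hσ
end

section
/- Let m, L, k, i, n ∈ ℕ with k ≥ 2, n ≥ 1 and 2 ≤ i+n ≤ k, let s ≥ 1 be real, and let M ∈ ℝ with 0 ≤ M ≤ L and (i+n−1)(s−1) ≥ M−m. Then: (i) ((k−i−n)!)^{s−1} / k^{L+m−M} ≤ ((k−1)!)^{s−1} (i+n)^{[M−m]₊} / k^L, where [y]₊ = max(y,0); (ii) for any positive integers k₁, …, k_n with i + k₁ + ⋯ + k_n = k, one has (1/k^m) ∏_{h=1}^{n} ((k_h−1)!)^{s−1} / k_h^{L−M} ≤ ((k−1)!)^{s−1} (i+n)^L / k^L. -/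
/-!
Write `p = i + n`. Since `(k-1)! = (k-p)! · (k-1)(k-2)⋯(k-p+1)` and every factor of the product
is at least `k-p+1 ≥ k/p`, we get `(k/p)^(p-1) (k-p)! ≤ (k-1)!`. Raising this to the power `s-1`
and using `[M-m]₊ ≤ (p-1)(s-1)` gives (i). For (ii), `∏ (k_h-1)! ≤ (∑ (k_h-1))! = (k-p)!` and
`k ≤ p ∏ k_h`, so the left side is at most `p^(L-M)` times the left side of (i); it remains to
note `L - M + [M-m]₊ ≤ L`.
-/

open Finset Nat

namespace Nat

theorem pow_mul_factorial_sub_le_factorial {n j : ℕ} (hj : j ≤ n) :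
    (n + 1 - j) ^ j * (n - j)! ≤ n ! := by
  rw [← factorial_mul_descFactorial hj, mul_comm]
  exact Nat.mul_le_mul_left _ (pow_sub_le_descFactorial n j)

theorem sum_le_card_mul_prod {ι : Type*} (s : Finset ι) (f : ι → ℕ) (hf : ∀ i ∈ s, 0 < f i) :
    ∑ i ∈ s, f i ≤ #s * ∏ i ∈ s, f i :=
  sum_le_card_nsmul s f _ fun _ hi => le_of_dvd (prod_pos hf) (dvd_prod_of_mem f hi)

theorem prod_factorial_le_factorial_sum {ι : Type*} (s : Finset ι) (f : ι → ℕ) :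
    ∏ i ∈ s, (f i)! ≤ (∑ i ∈ s, f i)! :=
  le_of_dvd (factorial_pos _) (prod_factorial_dvd_factorial_sum s f)

end Nat

theorem div_pow_mul_factorial_sub_le {k p : ℕ} (hp : 1 ≤ p) (hpk : p ≤ k) :
    ((k : ℝ) / p) ^ (p - 1) * ((k - p)! : ℝ) ≤ ((k - 1)! : ℝ) := by
  have hbase : (k : ℝ) / p ≤ (k - p + 1 : ℕ) := by
    rw [div_le_iff₀ (by positivity)]
    obtain ⟨q, rfl⟩ := Nat.exists_eq_add_of_le' hpk
    have : q + p ≤ (q + p - p + 1) * p := by rw [Nat.add_sub_cancel]; nlinarith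
    exact_mod_cast this
  have hfact := Nat.pow_mul_factorial_sub_le_factorial (n := k - 1) (j := p - 1) (by omega)
  rw [show k - 1 + 1 - (p - 1) = k - p + 1 by omega, show k - 1 - (p - 1) = k - p by omega] at hfact
  calc ((k : ℝ) / p) ^ (p - 1) * ((k - p)! : ℝ)
      ≤ ((k - p + 1 : ℕ) : ℝ) ^ (p - 1) * ((k - p)! : ℝ) := by gcongr
    _ ≤ ((k - 1)! : ℝ) := by exact_mod_cast hfact

theorem factorial_sub_rpow_mul_div_rpow_le {k p : ℕ} (hp : 1 ≤ p) (hpk : p ≤ k) {s a : ℝ}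
    (hs : 1 ≤ s) (ha : a ≤ ((p : ℝ) - 1) * (s - 1)) :
    ((k - p)! : ℝ) ^ (s - 1) * ((k : ℝ) / p) ^ a ≤ ((k - 1)! : ℝ) ^ (s - 1) := by
  have hkp : 1 ≤ (k : ℝ) / p := by
    rw [one_le_div₀ (by positivity)]; exact_mod_cast hpk
  have hpow : ((k : ℝ) / p) ^ (((p : ℝ) - 1) * (s - 1)) = (((k : ℝ) / p) ^ (p - 1)) ^ (s - 1) := by
    rw [Real.rpow_mul (by positivity), ← Nat.cast_pred hp, Real.rpow_natCast]
  calc ((k - p)! : ℝ) ^ (s - 1) * ((k : ℝ) / p) ^ a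
      ≤ ((k - p)! : ℝ) ^ (s - 1) * ((k : ℝ) / p) ^ (((p : ℝ) - 1) * (s - 1)) := by
        gcongr
    _ = (((k : ℝ) / p) ^ (p - 1) * ((k - p)! : ℝ)) ^ (s - 1) := by
        rw [hpow, Real.mul_rpow (by positivity) (by positivity), mul_comm]
    _ ≤ ((k - 1)! : ℝ) ^ (s - 1) :=
        Real.rpow_le_rpow (by positivity) (div_pow_mul_factorial_sub_le hp hpk) (by linarith)

theorem factorial_sub_rpow_div_le {k p : ℕ} (hp : 1 ≤ p) (hpk : p ≤ k) {s L m M : ℝ}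
    (hs : 1 ≤ s) (hMm : M - m ≤ ((p : ℝ) - 1) * (s - 1)) :
    ((k - p)! : ℝ) ^ (s - 1) / (k : ℝ) ^ (L + m - M) ≤
      ((k - 1)! : ℝ) ^ (s - 1) * (p : ℝ) ^ max (M - m) 0 / (k : ℝ) ^ L := by
  set a := max (M - m) 0
  have hk : (1 : ℝ) ≤ k := by exact_mod_cast hp.trans hpk
  have hp0 : (0 : ℝ) < p := by positivity
  have hkey := factorial_sub_rpow_mul_div_rpow_le hp hpk hs
    (max_le hMm (mul_nonneg (by simpa using hp) (by linarith)) : a ≤ _)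
  rw [Real.div_rpow (by positivity) hp0.le, mul_div_assoc', div_le_iff₀ (by positivity)] at hkey
  calc ((k - p)! : ℝ) ^ (s - 1) / (k : ℝ) ^ (L + m - M)
      ≤ ((k - p)! : ℝ) ^ (s - 1) / (k : ℝ) ^ (L - a) := by
        refine div_le_div_of_nonneg_left (by positivity) (by positivity)
          (Real.rpow_le_rpow_of_exponent_le hk ?_)
        linarith [le_max_left (M - m) 0]
    _ = ((k - p)! : ℝ) ^ (s - 1) * (k : ℝ) ^ a / (k : ℝ) ^ L := by
        rw [Real.rpow_sub (by positivity : (0 : ℝ) < k) L a, div_div_eq_mul_div]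
    _ ≤ ((k - 1)! : ℝ) ^ (s - 1) * (p : ℝ) ^ a / (k : ℝ) ^ L := by gcongr

theorem prod_factorial_pred_rpow_div_rpow_le {ι : Type*} [Fintype ι] {m k i p : ℕ} (kv : ι → ℕ)
    (hkv : ∀ h, 1 ≤ kv h) (hsum : i + ∑ h, kv h = k) (hcard : i + Fintype.card ι = p)
    (hp : 1 ≤ p) {s L M : ℝ} (hs : 1 ≤ s) (hM0 : 0 ≤ M) (hML : M ≤ L)
    (hMm : M - m ≤ ((p : ℝ) - 1) * (s - 1)) :
    (1 / (k : ℝ) ^ m) * ∏ h, ((kv h - 1)! : ℝ) ^ (s - 1) / (kv h : ℝ) ^ (L - M) ≤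
      ((k - 1)! : ℝ) ^ (s - 1) * (p : ℝ) ^ L / (k : ℝ) ^ L := by
  have hpk : p ≤ k := by
    rw [← hcard, ← hsum, ← Finset.card_univ]
    gcongr
    simpa using Finset.card_nsmul_le_sum univ kv 1 fun h _ => hkv h
  have hp0 : (0 : ℝ) < p := by positivity
  have hk0 : (0 : ℝ) < k := by have := hp.trans hpk; positivity
  have hfact : ∏ h, (kv h - 1)! ≤ (k - p)! := by
    have hsum_pred : ∑ h, (kv h - 1) = k - p := by
      have hsucc : ∑ h, (kv h - 1 + 1) = ∑ h, kv h :=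
        Finset.sum_congr rfl fun h _ => Nat.sub_add_cancel (hkv h)
      rw [Finset.sum_add_distrib, Finset.sum_const, Finset.card_univ, smul_eq_mul, mul_one]
        at hsucc
      omega
    exact hsum_pred ▸ Nat.prod_factorial_le_factorial_sum univ fun h => kv h - 1
  have hprod : (k : ℝ) / p ≤ ∏ h, (kv h : ℝ) := by
    rw [div_le_iff₀ hp0]
    have hP := Finset.prod_pos (s := univ) (f := kv) fun h _ => hkv h
    have hsum_le := Nat.sum_le_card_mul_prod univ kv fun h _ => hkv h
    rw [Finset.card_univ] at hsum_le
    have hk_le : k ≤ (∏ h, kv h) * p := by rw [← hsum, ← hcard]; nlinarith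
    exact_mod_cast hk_le
  calc (1 / (k : ℝ) ^ m) * ∏ h, ((kv h - 1)! : ℝ) ^ (s - 1) / (kv h : ℝ) ^ (L - M)
      = (∏ h, ((kv h - 1)! : ℝ)) ^ (s - 1) / ((∏ h, (kv h : ℝ)) ^ (L - M) * (k : ℝ) ^ m) := by
        rw [Finset.prod_div_distrib, ← Real.finsetProd_rpow _ _ (fun h _ => by positivity),
          ← Real.finsetProd_rpow _ _ (fun h _ => by positivity)]
        ring
    _ ≤ ((k - p)! : ℝ) ^ (s - 1) / (((k : ℝ) / p) ^ (L - M) * (k : ℝ) ^ m) := by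
        gcongr
        exact_mod_cast hfact
    _ = (p : ℝ) ^ (L - M) * (((k - p)! : ℝ) ^ (s - 1) / (k : ℝ) ^ (L + m - M)) := by
        rw [Real.div_rpow hk0.le hp0.le, show L + m - M = (L - M) + m by ring,
          Real.rpow_add hk0, Real.rpow_natCast]
        field_simp
    _ ≤ (p : ℝ) ^ (L - M) *
          (((k - 1)! : ℝ) ^ (s - 1) * (p : ℝ) ^ max (M - m) 0 / (k : ℝ) ^ L) := by
        gcongr _ * ?_
        exact factorial_sub_rpow_div_le hp hpk hs hMm
    _ = ((k - 1)! : ℝ) ^ (s - 1) * (p : ℝ) ^ (L - M + max (M - m) 0) / (k : ℝ) ^ L := by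
        rw [Real.rpow_add hp0]
        ring
    _ ≤ ((k - 1)! : ℝ) ^ (s - 1) * (p : ℝ) ^ L / (k : ℝ) ^ L := by
        gcongr
        · exact_mod_cast hp
        · have hm : (0 : ℝ) ≤ m := m.cast_nonneg
          linarith [max_le (by linarith : M - m ≤ M) hM0]

theorem factorial_distribution_estimates_general (m L k i n : ℕ)
    (hn : 1 ≤ n) (hink : i + n ≤ k)
    (s : ℝ) (hs : 1 ≤ s) (M : ℝ) (hM0 : 0 ≤ M) (hML : M ≤ (L : ℝ))
    (hMm : M - (m : ℝ) ≤ ((i : ℝ) + (n : ℝ) - 1) * (s - 1)) :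
    (((k - i - n).factorial : ℝ) ^ (s - 1) / (k : ℝ) ^ ((L : ℝ) + (m : ℝ) - M) ≤
      ((k - 1).factorial : ℝ) ^ (s - 1) * ((i + n : ℕ) : ℝ) ^ (max (M - (m : ℝ)) 0) /
        (k : ℝ) ^ (L : ℝ)) ∧
    (∀ kv : Fin n → ℕ, (∀ h, 1 ≤ kv h) → i + ∑ h, kv h = k →
      (1 / (k : ℝ) ^ (m : ℕ)) *
          ∏ h, ((kv h - 1).factorial : ℝ) ^ (s - 1) / ((kv h : ℝ) ^ ((L : ℝ) - M)) ≤
        ((k - 1).factorial : ℝ) ^ (s - 1) * ((i + n : ℕ) : ℝ) ^ (L : ℝ) / (k : ℝ) ^ (L : ℝ)) := by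
  have hp : 1 ≤ i + n := hn.trans (Nat.le_add_left n i)
  have hMm' : M - m ≤ (((i + n : ℕ) : ℝ) - 1) * (s - 1) := by push_cast; exact hMm
  rw [Nat.sub_sub]
  exact ⟨factorial_sub_rpow_div_le hp hink hs hMm', fun kv hkv hsum =>
    prod_factorial_pred_rpow_div_rpow_le kv hkv hsum (by simp) hp hs hM0 hML hMm'⟩

/-- **Lemma 4.2** (Lastra–Tahara). Let `m, L, k, i, n ∈ ℕ` with `k ≥ 2`, `n ≥ 1`,
`2 ≤ i+n ≤ k`, let `s ≥ 1` be real, and let `M ∈ ℝ` with `0 ≤ M ≤ L` and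
`(i+n−1)(s−1) ≥ M−m`. Then
(i) `(k−i−n)!^{s−1}/k^{L+m−M} ≤ (k−1)!^{s−1} (i+n)^{[M−m]₊}/k^L`;
(ii) for positive integers `k₁,…,k_n` with `i+k₁+⋯+k_n = k`,
`(1/k^m) ∏_h (k_h−1)!^{s−1}/k_h^{L−M} ≤ (k−1)!^{s−1} (i+n)^L/k^L`. -/
theorem factorial_distribution_estimates (m L k i n : ℕ)
    (hk : 2 ≤ k) (hn : 1 ≤ n) (hin2 : 2 ≤ i + n) (hink : i + n ≤ k)
    (s : ℝ) (hs : 1 ≤ s) (M : ℝ) (hM0 : 0 ≤ M) (hML : M ≤ (L : ℝ))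
    (hMm : M - (m : ℝ) ≤ ((i : ℝ) + (n : ℝ) - 1) * (s - 1)) :
    (((k - i - n).factorial : ℝ) ^ (s - 1) / (k : ℝ) ^ ((L : ℝ) + (m : ℝ) - M) ≤
      ((k - 1).factorial : ℝ) ^ (s - 1) * ((i + n : ℕ) : ℝ) ^ (max (M - (m : ℝ)) 0) /
        (k : ℝ) ^ (L : ℝ)) ∧
    (∀ kv : Fin n → ℕ, (∀ h, 1 ≤ kv h) → i + ∑ h, kv h = k →
      (1 / (k : ℝ) ^ (m : ℕ)) *
          ∏ h, ((kv h - 1).factorial : ℝ) ^ (s - 1) / ((kv h : ℝ) ^ ((L : ℝ) - M)) ≤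
        ((k - 1).factorial : ℝ) ^ (s - 1) * ((i + n : ℕ) : ℝ) ^ (L : ℝ) / (k : ℝ) ^ (L : ℝ)) :=
  factorial_distribution_estimates_general m L k i n hn hink s hs M hM0 hML hMm
end

section
/- Let 0 ≤ a₂ < a₁ < a₀ and 0 ≤ b₀ < b₁ < b₂ be real numbers, and set h₀ = (b₁−b₀)/(a₀−a₁) and h₁ = (b₂−b₁)/(a₁−a₂). If h₀ > h₁, then there exists a constant c > 0 such that k^{a₀} l^{b₀} + k^{a₁} l^{b₁} + k^{a₂} l^{b₂} ≤ c · k^{a₁} l^{b₁} for every l ∈ ℕ* and k = ⌊l^{h₁}⌋. -/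
/-!
Put `h₁ = (b₂ - b₁)/(a₁ - a₂)`. Since `l ≥ 1`, `k = ⌊l^{h₁}⌋` satisfies `k ≥ 1` and
`k ≤ l^{h₁} ≤ 2k`, Dividing by the middle monomial,
the first term becomes `k^{a₀-a₁} l^{b₀-b₁} ≤ l^{h₁(a₀-a₁) - (b₁-b₀)} ≤ 1` because `h₁ < h₀`,
and the last becomes `l^{b₂-b₁} k^{a₂-a₁} = (l^{h₁}/k)^{a₁-a₂} ≤ 2^{a₁-a₂}`.
-/

open Real

lemma Nat.le_two_mul_floor {R : Type*} [Semiring R] [LinearOrder R] [IsStrictOrderedRing R]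
    [FloorSemiring R] {x : R} (hx : 1 ≤ x) : x ≤ 2 * ⌊x⌋₊ :=
  calc x ≤ ⌊x⌋₊ + 1 := (Nat.lt_floor_add_one x).le
    _ ≤ ⌊x⌋₊ + ⌊x⌋₊ := by gcongr; exact_mod_cast (Nat.one_le_floor_iff x).2 hx
    _ = 2 * ⌊x⌋₊ := (two_mul _).symm

lemma Real.rpow_mul_rpow_le_of_rpow_sub_le {x y a a' b b' C : ℝ} (hx : 0 < x) (hy : 0 < y)
    (h : x ^ (a - a') ≤ C * y ^ (b' - b)) : x ^ a * y ^ b ≤ C * (x ^ a' * y ^ b') :=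
  calc x ^ a * y ^ b = x ^ (a - a') * (x ^ a' * y ^ b) := by
        rw [← mul_assoc, ← rpow_add hx, sub_add_cancel]
    _ ≤ C * y ^ (b' - b) * (x ^ a' * y ^ b) := by gcongr
    _ = C * (x ^ a' * y ^ b') := by
        rw [← sub_add_cancel b' b, rpow_add hy, add_sub_cancel_right]; ring

lemma Real.rpow_le_rpow_of_le_rpow {x y h α β : ℝ} (hx : 0 ≤ x) (hy : 1 ≤ y) (hxy : x ≤ y ^ h)
    (hα : 0 ≤ α) (hβ : h * α ≤ β) : x ^ α ≤ y ^ β :=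
  calc x ^ α ≤ (y ^ h) ^ α := rpow_le_rpow hx hxy hα
    _ = y ^ (h * α) := (rpow_mul (zero_le_one.trans hy) h α).symm
    _ ≤ y ^ β := rpow_le_rpow_of_exponent_le hy hβ

lemma Real.rpow_mul_le_of_rpow_le_mul {x y h α C : ℝ} (hx : 0 ≤ x) (hy : 0 ≤ y) (hC : 0 ≤ C)
    (hyx : y ^ h ≤ C * x) (hα : 0 ≤ α) : y ^ (h * α) ≤ C ^ α * x ^ α :=
  calc y ^ (h * α) = (y ^ h) ^ α := rpow_mul hy h α
    _ ≤ (C * x) ^ α := rpow_le_rpow (by positivity) hyx hα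
    _ = C ^ α * x ^ α := mul_rpow hC hx

theorem three_term_comparison_middle_general (a₀ a₁ a₂ b₀ b₁ b₂ : ℝ)
    (ha21 : a₂ < a₁) (ha10 : a₁ < a₀)
    (hb12 : b₁ < b₂)
    (hh : (b₂ - b₁) / (a₁ - a₂) < (b₁ - b₀) / (a₀ - a₁)) :
    ∃ c : ℝ, 0 < c ∧ ∀ l : ℕ, 1 ≤ l → ∀ k : ℕ,
      k = Nat.floor ((l : ℝ) ^ ((b₂ - b₁) / (a₁ - a₂))) →
      (k : ℝ) ^ a₀ * (l : ℝ) ^ b₀ + (k : ℝ) ^ a₁ * (l : ℝ) ^ b₁ +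
          (k : ℝ) ^ a₂ * (l : ℝ) ^ b₂ ≤
        c * ((k : ℝ) ^ a₁ * (l : ℝ) ^ b₁) := by
  set h₁ := (b₂ - b₁) / (a₁ - a₂) with hh₁
  have ha₁₂ : 0 < a₁ - a₂ := sub_pos.2 ha21
  have ha₀₁ : 0 < a₀ - a₁ := sub_pos.2 ha10
  refine ⟨1 + 1 + 2 ^ (a₁ - a₂), by positivity, ?_⟩
  rintro l hl k rfl
  have hl₁ : (1 : ℝ) ≤ l := by exact_mod_cast hl
  have hlh : 1 ≤ (l : ℝ) ^ h₁ := one_le_rpow hl₁ (div_pos (sub_pos.2 hb12) ha₁₂).le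
  have hk : (0 : ℝ) < ⌊(l : ℝ) ^ h₁⌋₊ := by exact_mod_cast Nat.floor_pos.2 hlh
  have hl₀ : (0 : ℝ) < l := by linarith
  have first := rpow_mul_rpow_le_of_rpow_sub_le (a' := a₁) (b' := b₁) (C := 1) hk hl₀ <| by
    rw [one_mul]
    exact rpow_le_rpow_of_le_rpow hk.le hl₁ (Nat.floor_le (by positivity)) ha₀₁.le
      ((lt_div_iff₀ ha₀₁).1 hh).le
  have last := rpow_mul_rpow_le_of_rpow_sub_le (a' := b₁) (b' := a₁) hl₀ hk <| by
    rw [← div_mul_cancel₀ (b₂ - b₁) ha₁₂.ne', ← hh₁]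
    exact rpow_mul_le_of_rpow_le_mul hk.le hl₀.le zero_le_two (Nat.le_two_mul_floor hlh) ha₁₂.le
  rw [mul_comm (_ ^ b₂), mul_comm (_ ^ b₁) (_ ^ a₁)] at last
  linarith

/-- **Lemma 5.4** (Lastra–Tahara). Let `0 ≤ a₂ < a₁ < a₀` and `0 ≤ b₀ < b₁ < b₂`, and set
`h₀ = (b₁−b₀)/(a₀−a₁)`, `h₁ = (b₂−b₁)/(a₁−a₂)`. If `h₀ > h₁`, there is `c > 0` with
`k^{a₀} l^{b₀} + k^{a₁} l^{b₁} + k^{a₂} l^{b₂} ≤ c k^{a₁} l^{b₁}`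
for every `l ∈ ℕ*` and `k = ⌊l^{h₁}⌋`. -/
theorem three_term_comparison_middle (a₀ a₁ a₂ b₀ b₁ b₂ : ℝ)
    (ha2 : 0 ≤ a₂) (ha21 : a₂ < a₁) (ha10 : a₁ < a₀)
    (hb0 : 0 ≤ b₀) (hb01 : b₀ < b₁) (hb12 : b₁ < b₂)
    (hh : (b₂ - b₁) / (a₁ - a₂) < (b₁ - b₀) / (a₀ - a₁)) :
    ∃ c : ℝ, 0 < c ∧ ∀ l : ℕ, 1 ≤ l → ∀ k : ℕ,
      k = Nat.floor ((l : ℝ) ^ ((b₂ - b₁) / (a₁ - a₂))) →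
      (k : ℝ) ^ a₀ * (l : ℝ) ^ b₀ + (k : ℝ) ^ a₁ * (l : ℝ) ^ b₁ +
          (k : ℝ) ^ a₂ * (l : ℝ) ^ b₂ ≤
        c * ((k : ℝ) ^ a₁ * (l : ℝ) ^ b₁) :=
  three_term_comparison_middle_general a₀ a₁ a₂ b₀ b₁ b₂ ha21 ha10 hb12 hh
end

section
/- (i) For any reals a > 0, b > 0, c > 0, d > 0 and 0 ≤ δ < 1, the quotient (l!)^a / (⌊c l^δ + d⌋!)^b tends to ∞ as l → ∞ along ℕ*. (ii) For any reals a > b ≥ 0, c > 0 and 0 ≤ δ < 1, the quotient (l!)^a / (⌊c l^δ + l⌋!)^b tends to ∞ as l → ∞ along ℕ*. -/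
/-!
Take logarithms. By Stirling, `log l! ≍ l log l`. If `m ≤ k + C l^δ` and `m ≤ K l`, then
`log m! ≤ log k! + C l^δ log (K l)`, and `l^δ log l = o(l) = o(log l!)` because `δ < 1`.
In (i) we take `k = 0`, so `a log l! - b log m! ≥ a log l! - o(log l!)`. In (ii) we take
`k = l`, so the difference is at least `(a - b) log l! - o(log l!)`, which is where `a > b`
is needed.
-/

open Filter Real Asymptotics
open scoped Nat

lemma tendsto_log_factorial_atTop : Tendsto (fun n : ℕ => log n !) atTop atTop := by
  refine tendsto_atTop_mono' _ ?_ (tendsto_log_atTop.comp tendsto_natCast_atTop_atTop)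
  filter_upwards [eventually_ge_atTop 1] with n hn
  exact log_le_log (by exact_mod_cast hn) (by exact_mod_cast n.self_le_factorial)

lemma isLittleO_natCast_log_factorial :
    (fun n : ℕ => (n : ℝ)) =o[atTop] fun n => log n ! := by
  have hone : (fun _ => (1 : ℝ)) =o[atTop] fun n : ℕ => log n - 1 :=
    (isLittleO_one_left_iff ℝ).2 <| tendsto_norm_atTop_atTop.comp <|
      tendsto_atTop_add_const_right _ _ (tendsto_log_atTop.comp tendsto_natCast_atTop_atTop)
  refine (((isBigO_refl _ _).mul_isLittleO hone).trans_isBigO (IsBigO.of_bound' ?_)).congr_left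
    fun n => mul_one (n : ℝ)
  filter_upwards [eventually_ge_atTop 3] with n hn
  have h3 : (3 : ℝ) ≤ n := by exact_mod_cast hn
  have hlog : 1 ≤ log n := by
    rw [le_log_iff_exp_le (by positivity)]
    linarith [exp_one_lt_three]
  have hnonneg : 0 ≤ (n : ℝ) * (log n - 1) := mul_nonneg (by positivity) (by linarith)
  have hfac := Stirling.le_log_factorial_stirling (n := n) (by lia)
  have h2π : 0 ≤ log (2 * π) := log_nonneg (by linarith [pi_gt_three])
  rw [norm_of_nonneg hnonneg, norm_of_nonneg (by linarith)]
  linarith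

lemma isLittleO_rpow_mul_log_mul {δ K : ℝ} (hδ : δ < 1) (hK : 0 < K) :
    (fun x : ℝ => x ^ δ * log (K * x)) =o[atTop] id := by
  have hpow : Tendsto (fun x : ℝ => x ^ (1 - δ)) atTop atTop := tendsto_rpow_atTop (by linarith)
  have hlog : (fun x => log (K * x)) =o[atTop] fun x : ℝ => x ^ (1 - δ) := by
    have hconst : (fun _ => log K) =o[atTop] fun x : ℝ => x ^ (1 - δ) :=
      isLittleO_const_left.2 (Or.inr (tendsto_norm_atTop_atTop.comp hpow))
    refine (hconst.add (isLittleO_log_rpow_atTop (by linarith))).congr' ?_ EventuallyEq.rfl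
    filter_upwards [eventually_gt_atTop 0] with x hx
    exact (log_mul hK.ne' hx.ne').symm
  refine ((isBigO_refl (fun x : ℝ => x ^ δ) atTop).mul_isLittleO hlog).congr' EventuallyEq.rfl ?_
  filter_upwards [eventually_gt_atTop 0] with x hx
  rw [← rpow_add hx, add_sub_cancel, rpow_one, id]

lemma Filter.Tendsto.atTop_sub_isLittleO {ι : Type*} {l : Filter ι} {f g : ι → ℝ}
    (hf : Tendsto f l atTop) (hg : g =o[l] f) : Tendsto (fun i => f i - g i) l atTop :=
  (IsEquivalent.refl.sub_isLittleO hg).symm.tendsto_atTop hf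

lemma tendsto_mul_log_factorial_sub_rpow_mul_log {α β δ K : ℝ} (hα : 0 < α) (hδ : δ < 1)
    (hK : 0 < K) :
    Tendsto (fun l : ℕ => α * log l ! - β * ((l : ℝ) ^ δ * log (K * l))) atTop atTop := by
  have hsmall := ((isLittleO_rpow_mul_log_mul hδ hK).comp_tendsto
    tendsto_natCast_atTop_atTop).trans isLittleO_natCast_log_factorial
  exact (tendsto_log_factorial_atTop.const_mul_atTop hα).atTop_sub_isLittleO
    ((hsmall.const_mul_left β).const_mul_right hα.ne')

lemma log_factorial_le_log_factorial_add {k m : ℕ} {y : ℝ} (hkm : k ≤ m) (hy : 0 < y)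
    (hmy : (m : ℝ) ≤ y) : log m ! ≤ log k ! + (m - k : ℕ) * log y := by
  have hfac : (m ! : ℝ) ≤ k ! * y ^ (m - k) := by
    calc (m ! : ℝ) = k ! * m.descFactorial (m - k) := by
          rw [← Nat.factorial_mul_descFactorial (Nat.sub_le m k), Nat.sub_sub_self hkm]
          push_cast; rfl
      _ ≤ k ! * y ^ (m - k) := by
          gcongr
          calc (m.descFactorial (m - k) : ℝ) ≤ (m : ℝ) ^ (m - k) := by
                exact_mod_cast m.descFactorial_le_pow _
            _ ≤ y ^ (m - k) := by gcongr
  have := log_le_log (by positivity) hfac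
  rwa [log_mul (by positivity) (by positivity), log_pow] at this

lemma tendsto_rpow_div_rpow_atTop_of_log {ι : Type*} {l : Filter ι} {x y : ι → ℝ} {a b : ℝ}
    (hx : ∀ i, 0 < x i) (hy : ∀ i, 0 < y i)
    (h : Tendsto (fun i => a * log (x i) - b * log (y i)) l atTop) :
    Tendsto (fun i => x i ^ a / y i ^ b) l atTop :=
  (tendsto_exp_atTop.comp h).congr fun i => by
    rw [Function.comp_apply, exp_sub, rpow_def_of_pos (hx i), rpow_def_of_pos (hy i),
      mul_comm a, mul_comm b]

variable {a b c δ : ℝ}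

theorem tendsto_factorial_rpow_div_factorial_floor_add_const {d : ℝ} (ha : 0 < a) (hb : 0 ≤ b)
    (hc : 0 ≤ c) (hd : 0 ≤ d) (hδ₀ : 0 ≤ δ) (hδ₁ : δ < 1) :
    Tendsto (fun l : ℕ => (l ! : ℝ) ^ a / (⌊c * (l : ℝ) ^ δ + d⌋₊ ! : ℝ) ^ b) atTop atTop := by
  refine tendsto_rpow_div_rpow_atTop_of_log (fun _ => by positivity) (fun _ => by positivity) ?_
  refine tendsto_atTop_mono' _ ?_ (tendsto_mul_log_factorial_sub_rpow_mul_log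
    (β := b * (c + d)) (K := c + d + 1) ha hδ₁ (by positivity))
  filter_upwards [eventually_ge_atTop 1] with l hl
  have hl : (1 : ℝ) ≤ l := by exact_mod_cast hl
  have hpow : 1 ≤ (l : ℝ) ^ δ := one_le_rpow hl hδ₀
  have hpow_le : (l : ℝ) ^ δ ≤ l := rpow_le_self_of_one_le hl hδ₁.le
  set m := ⌊c * (l : ℝ) ^ δ + d⌋₊
  have hm : (m : ℝ) ≤ (c + d) * (l : ℝ) ^ δ :=
    (Nat.floor_le (by positivity)).trans (by nlinarith)
  have hlog : 0 ≤ log ((c + d + 1) * l) := log_nonneg (by nlinarith)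
  have hfac : log m ! ≤ (c + d) * ((l : ℝ) ^ δ * log ((c + d + 1) * l)) := by
    have := log_factorial_le_log_factorial_add (Nat.zero_le m) (y := (c + d + 1) * l)
      (by positivity) (by nlinarith)
    rw [Nat.factorial_zero, Nat.cast_one, log_one, zero_add, Nat.sub_zero] at this
    linarith [mul_le_mul_of_nonneg_right hm hlog]
  linarith [mul_le_mul_of_nonneg_left hfac hb]

theorem tendsto_factorial_rpow_div_factorial_floor_add_self (hb : 0 ≤ b) (hba : b < a)
    (hc : 0 ≤ c) (hδ₁ : δ < 1) :
    Tendsto (fun l : ℕ => (l ! : ℝ) ^ a / (⌊c * (l : ℝ) ^ δ + l⌋₊ ! : ℝ) ^ b) atTop atTop := by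
  refine tendsto_rpow_div_rpow_atTop_of_log (fun _ => by positivity) (fun _ => by positivity) ?_
  refine tendsto_atTop_mono' _ ?_ (tendsto_mul_log_factorial_sub_rpow_mul_log
    (β := b * c) (K := c + 1) (sub_pos.2 hba) hδ₁ (by positivity))
  filter_upwards [eventually_ge_atTop 1] with l hl
  have hl : (1 : ℝ) ≤ l := by exact_mod_cast hl
  have hpow_le : (l : ℝ) ^ δ ≤ l := rpow_le_self_of_one_le hl hδ₁.le
  set m := ⌊c * (l : ℝ) ^ δ + l⌋₊
  have hlm : l ≤ m := Nat.le_floor (le_add_of_nonneg_left (by positivity))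
  have hm : (m : ℝ) ≤ c * (l : ℝ) ^ δ + l := Nat.floor_le (by positivity)
  have hlog : 0 ≤ log ((c + 1) * l) := log_nonneg (by nlinarith)
  have hfac : log m ! ≤ log l ! + c * ((l : ℝ) ^ δ * log ((c + 1) * l)) := by
    have := log_factorial_le_log_factorial_add hlm (y := (c + 1) * l) (by positivity) (by nlinarith)
    rw [Nat.cast_sub hlm] at this
    linarith [mul_le_mul_of_nonneg_right (show (m - l : ℝ) ≤ c * (l : ℝ) ^ δ by linarith) hlog]
  linarith [mul_le_mul_of_nonneg_left hfac hb]

/-- **Lemma 5.5** (Lastra–Tahara).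
(i) For reals `a,b,c,d > 0` and `0 ≤ δ < 1`, `l!^a/(⌊c l^δ + d⌋!)^b → ∞` as `l → ∞`;
(ii) for reals `a > b ≥ 0`, `c > 0` and `0 ≤ δ < 1`, `l!^a/(⌊c l^δ + l⌋!)^b → ∞`
as `l → ∞`. -/
theorem factorial_quotient_tendsto_atTop :
    (∀ a b c d δ : ℝ, 0 < a → 0 < b → 0 < c → 0 < d → 0 ≤ δ → δ < 1 →
      Filter.Tendsto
        (fun l : ℕ => ((l.factorial : ℝ)) ^ a /
          (((Nat.floor (c * (l : ℝ) ^ δ + d)).factorial : ℝ)) ^ b)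
        Filter.atTop Filter.atTop) ∧
    (∀ a b c δ : ℝ, 0 ≤ b → b < a → 0 < c → 0 ≤ δ → δ < 1 →
      Filter.Tendsto
        (fun l : ℕ => ((l.factorial : ℝ)) ^ a /
          (((Nat.floor (c * (l : ℝ) ^ δ + (l : ℝ))).factorial : ℝ)) ^ b)
        Filter.atTop Filter.atTop) :=
  ⟨fun _ _ _ _ _ ha hb hc hd hδ₀ hδ₁ =>
    tendsto_factorial_rpow_div_factorial_floor_add_const ha hb.le hc.le hd.le hδ₀ hδ₁,
   fun _ _ _ _ hb hba hc _ hδ₁ =>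
    tendsto_factorial_rpow_div_factorial_floor_add_self hb hba hc.le hδ₁⟩
end
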